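/- arXiv:2205.01299 — 6 statements merged into one kernel-verified Lean document; each statement's English description precedes it below -/
import Mathlib

section
/- Let k ≥ 1, let A be a finite abelian group, and let G = C_{2^k} × A, so G is a finite abelian group of even order with a cyclic direct factor ⟨c⟩ of order 2^k. Let S ⊆ G with e ∉ S and S = S⁻¹, and let Γ = Cay(G, S). Let H = ⟨c²⟩ × A ≅ C_{2^{k-1}} × A. Then Γ is a Cayley graph on the generalized dihedral group Dih(H); that is, Aut(Γ) contains a subgroup isomorphic to Dih(C_{2^{k-1}} × A) acting regularly on the vertices. -/
/-- The Cayley graph of a group `G` with connection set `S` (with `1 ∉ S` and `S⁻¹ = S`):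
`u` is adjacent to `v` iff `v * u⁻¹ ∈ S`. -/
def cayleyGraph {G : Type*} [Group G] (S : Set G) (h1 : (1 : G) ∉ S) (hinv : S⁻¹ = S) :
    SimpleGraph G where
  Adj u v := v * u⁻¹ ∈ S
  symm := by
    constructor
    intro u v h
    have h' : (v * u⁻¹)⁻¹ ∈ S⁻¹ := Set.inv_mem_inv.mpr h
    rw [hinv] at h'
    simpa [mul_inv_rev] using h'
  loopless := by
    constructor
    intro u h
    simp only [mul_inv_cancel] at h
    exact h1 h

/-- A graph `Γ` is a Cayley graph on a group `H` iff its automorphism group contains a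
subgroup isomorphic to `H` acting regularly on the vertices. -/
def IsCayleyGraphOn {V : Type*} (Γ : SimpleGraph V) (H : Type*) [Group H] : Prop :=
  ∃ K : Subgroup (Equiv.Perm V),
    (∀ f ∈ K, ∀ u v : V, Γ.Adj (f u) (f v) ↔ Γ.Adj u v) ∧
    Nonempty (K ≃* H) ∧
    ∀ u v : V, ∃! f : K, (f : Equiv.Perm V) u = v


/-- The generalized dihedral group on an abelian group `A`:
elements `r a` (for `a ∈ A`) together with reflections `sr a = x * r a`,
where `x` is an involution inverting `A`. -/
inductive GenDihedral (A : Type*) : Type _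
  | r : A → GenDihedral A
  | sr : A → GenDihedral A

namespace GenDihedral

variable {A : Type*} [CommGroup A]

def mul : GenDihedral A → GenDihedral A → GenDihedral A
  | r a, r b => r (a * b)
  | r a, sr b => sr (b * a⁻¹)
  | sr a, r b => sr (a * b)
  | sr a, sr b => r (b * a⁻¹)

instance : Mul (GenDihedral A) := ⟨mul⟩

def inv : GenDihedral A → GenDihedral A
  | r a => r a⁻¹
  | sr a => sr a

instance : Inv (GenDihedral A) := ⟨inv⟩
instance : One (GenDihedral A) := ⟨r 1⟩

@[simp] lemma r_mul_r (a b : A) : r a * r b = r (a * b) := rfl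
@[simp] lemma r_mul_sr (a b : A) : r a * sr b = sr (b * a⁻¹) := rfl
@[simp] lemma sr_mul_r (a b : A) : sr a * r b = sr (a * b) := rfl
@[simp] lemma sr_mul_sr (a b : A) : sr a * sr b = r (b * a⁻¹) := rfl
@[simp] lemma one_def : (1 : GenDihedral A) = r 1 := rfl
@[simp] lemma inv_r (a : A) : (r a)⁻¹ = r a⁻¹ := rfl
@[simp] lemma inv_sr (a : A) : (sr a)⁻¹ = sr a := rfl

instance : Group (GenDihedral A) where
  mul_assoc := by
    rintro (a | a) (b | b) (c | c) <;>
      simp [mul_comm, mul_left_comm, mul_assoc, mul_inv_rev]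
  one_mul := by rintro (a | a) <;> simp
  mul_one := by rintro (a | a) <;> simp
  inv_mul_cancel := by rintro (a | a) <;> simp

end GenDihedral

/-! ### Auxiliary material for the main theorem -/

section DoublingHom

variable (k : ℕ)

private lemma cayleyAux_pow_eq (hk : 1 ≤ k) : (2:ℕ)^(k-1) * 2 = 2^k := by
  rw [← pow_succ, Nat.sub_add_cancel hk]

/-- The injective hom `ZMod 2^(k-1) →+ ZMod 2^k` sending `1` to `2`. -/
private def fA (hk : 1 ≤ k) : ZMod (2^(k-1)) →+ ZMod (2^k) :=
  ZMod.lift (2^(k-1)) ⟨zmultiplesHom (ZMod (2^k)) 2, by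
    show (((2^(k-1) : ℕ) : ℤ)) • (2 : ZMod (2^k)) = 0
    rw [zsmul_eq_mul]
    rw [show (((2^(k-1) : ℕ) : ℤ) : ZMod (2^k)) * 2 = ((2^(k-1)*2 : ℕ) : ZMod (2^k)) by
      push_cast; ring]
    rw [cayleyAux_pow_eq k hk, ZMod.natCast_self]⟩

private lemma fA_natCast (hk : 1 ≤ k) (t : ℕ) :
    fA k hk (t : ZMod (2^(k-1))) = ((2*t : ℕ) : ZMod (2^k)) := by
  have h : ((t : ℕ) : ZMod (2^(k-1))) = ((t : ℤ) : ZMod (2^(k-1))) := by push_cast; ring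
  rw [h, fA, ZMod.lift_coe]
  show (t : ℤ) • (2 : ZMod (2^k)) = _
  rw [zsmul_eq_mul]
  push_cast
  ring

private lemma fA_apply (hk : 1 ≤ k) (x : ZMod (2^(k-1))) :
    fA k hk x = ((2 * x.val : ℕ) : ZMod (2^k)) := by
  haveI : NeZero ((2:ℕ)^(k-1)) := ⟨pow_ne_zero _ two_ne_zero⟩
  conv_lhs => rw [← ZMod.natCast_rightInverse x]
  exact fA_natCast k hk x.val

private lemma fA_injective (hk : 1 ≤ k) : Function.Injective (fA k hk) := by
  haveI : NeZero ((2:ℕ)^(k-1)) := ⟨pow_ne_zero _ two_ne_zero⟩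
  intro x y hxy
  rw [fA_apply, fA_apply, ZMod.natCast_eq_natCast_iff] at hxy
  have hx := ZMod.val_lt x
  have hy := ZMod.val_lt y
  have hn := cayleyAux_pow_eq k hk
  have := Nat.ModEq.eq_of_lt_of_lt hxy (by omega) (by omega)
  exact ZMod.val_injective _ (by omega)

end DoublingHom

section dihPerm

variable {G : Type*} [CommGroup G] {H : Type*} [CommGroup H] (ι : H →* G) (c : G)

private def dihPermFun : GenDihedral H → Equiv.Perm G
  | .r a => Equiv.mulLeft (ι a)
  | .sr a => (Equiv.inv G).trans (Equiv.mulLeft (c * (ι a)⁻¹))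

private def dihPerm : GenDihedral H →* Equiv.Perm G :=
  MonoidHom.mk' (dihPermFun ι c) (by
    rintro (a | a) (b | b) <;> ext x <;>
      simp [dihPermFun, Equiv.Perm.mul_apply, mul_comm, mul_left_comm, mul_assoc, mul_inv_rev,
        mul_inv_cancel_left, inv_mul_cancel_left] <;>
      rw [mul_left_comm x c⁻¹, mul_inv_cancel_left])

@[simp] private lemma dihPerm_r (a : H) (x : G) : dihPerm ι c (.r a) x = ι a * x := rfl
@[simp] private lemma dihPerm_sr (a : H) (x : G) :
    dihPerm ι c (.sr a) x = c * (ι a)⁻¹ * x⁻¹ := rfl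

private lemma dihPerm_injective (hι : Function.Injective ι)
    (hc : ∀ a b : H, ι a ≠ c * (ι b)⁻¹) :
    Function.Injective (dihPerm ι c) := by
  rintro (a | a) (b | b) h <;>
    have h1 := congrArg (fun e : Equiv.Perm G => e 1) h <;>
    simp only [dihPerm_r, dihPerm_sr, mul_one, inv_one] at h1
  · exact congrArg _ (hι h1)
  · exact absurd h1 (hc a b)
  · exact absurd h1.symm (hc b a)
  · exact congrArg _ (hι (inv_injective (mul_left_cancel h1)))

end dihPerm

section CommGroupFacts

variable {G : Type*} [CommGroup G]

private lemma commFact1 (a v u : G) : (a * v) * (a * u)⁻¹ = v * u⁻¹ := by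
  rw [← div_eq_mul_inv, mul_div_mul_left_eq_div, div_eq_mul_inv]

private lemma commFact2 (c a v u : G) :
    (c * a⁻¹ * v⁻¹) * (c * a⁻¹ * u⁻¹)⁻¹ = (v * u⁻¹)⁻¹ := by
  rw [← div_eq_mul_inv, mul_div_mul_left_eq_div, div_inv_eq_mul, mul_inv_rev, inv_inv,
    mul_comm]

private lemma commFact3 {c b u v : G} (h : c * b⁻¹ * u⁻¹ = v) : b = c * (u * v)⁻¹ := by
  have h2 : u * v = c * b⁻¹ := by rw [← h, mul_comm, inv_mul_cancel_right]
  rw [h2, mul_inv_rev, inv_inv, mul_comm b, mul_inv_cancel_left]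

private lemma commFact4 (c u v : G) : c * (c * (u * v)⁻¹)⁻¹ * u⁻¹ = v := by
  rw [mul_inv_rev, inv_inv, mul_comm (u * v) c⁻¹, mul_inv_cancel_left, mul_comm u v,
    mul_inv_cancel_right]

end CommGroupFacts

/-- Let `G = C_{2^k} × A` (`k ≥ 1`, `A` finite abelian), an abelian group of
even order with cyclic direct factor `⟨c⟩` of order `2^k`. Every Cayley graph on `G` (with
symmetric connection set avoiding the identity) is also a Cayley graph on the generalized
dihedral group `Dih(C_{2^(k-1)} × A)`. -/
theorem cayley_on_abelian_even_isCayley_on_genDihedral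
    (k : ℕ) (hk : 1 ≤ k) (A : Type*) [CommGroup A] [Finite A]
    (S : Set (Multiplicative (ZMod (2 ^ k)) × A))
    (h1 : (1 : Multiplicative (ZMod (2 ^ k)) × A) ∉ S) (hinv : S⁻¹ = S) :
    IsCayleyGraphOn (cayleyGraph S h1 hinv)
      (GenDihedral (Multiplicative (ZMod (2 ^ (k - 1))) × A)) := by
  classical
  haveI : NeZero ((2:ℕ)^(k-1)) := ⟨pow_ne_zero _ two_ne_zero⟩
  haveI : NeZero ((2:ℕ)^k) := ⟨pow_ne_zero _ two_ne_zero⟩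
  -- the embedding of the index-2 subgroup
  let ι : Multiplicative (ZMod (2^(k-1))) × A →* Multiplicative (ZMod (2^k)) × A :=
    (AddMonoidHom.toMultiplicative (fA k hk)).prodMap (MonoidHom.id A)
  have hι_apply : ∀ a, ι a = (Multiplicative.ofAdd (fA k hk (Multiplicative.toAdd a.1)), a.2) :=
    fun a => rfl
  let c : Multiplicative (ZMod (2^k)) × A := (Multiplicative.ofAdd 1, 1)
  -- the parity character
  let χ : ZMod (2^k) →+* ZMod 2 := ZMod.castHom (dvd_pow_self 2 (by omega)) (ZMod 2)
  have hχ0 : ∀ x, χ (fA k hk x) = 0 := by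
    intro x
    rw [fA_apply k hk x, map_natCast, ZMod.natCast_eq_zero_iff]
    exact ⟨x.val, rfl⟩
  have hχ1 : χ 1 = 1 := map_one χ
  have hsurj : ∀ y : ZMod (2^k), χ y = 0 → ∃ x, fA k hk x = y := by
    intro y hy
    have hcast : χ y = ((y.val : ℕ) : ZMod 2) := by
      conv_lhs => rw [← ZMod.natCast_rightInverse y]
      rw [map_natCast]
    rw [hcast, ZMod.natCast_eq_zero_iff] at hy
    obtain ⟨t, ht⟩ := hy
    refine ⟨(t : ZMod (2^(k-1))), ?_⟩
    rw [fA_natCast k hk t, ← ht]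
    exact ZMod.natCast_rightInverse y
  have hι_inj : Function.Injective ι := by
    intro a b h
    rw [hι_apply, hι_apply, Prod.ext_iff] at h
    obtain ⟨ha, hb⟩ := h
    have h1' : fA k hk (Multiplicative.toAdd a.1) = fA k hk (Multiplicative.toAdd b.1) :=
      Multiplicative.ofAdd.injective ha
    have h2' : Multiplicative.toAdd a.1 = Multiplicative.toAdd b.1 := fA_injective k hk h1'
    exact Prod.ext (Multiplicative.toAdd.injective h2') hb
  have hχι : ∀ a, χ (Multiplicative.toAdd (ι a).1) = 0 := by
    intro a
    rw [hι_apply]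
    simpa using hχ0 (Multiplicative.toAdd a.1)
  have hc : ∀ a b, ι a ≠ c * (ι b)⁻¹ := by
    intro a b h
    have e1 : χ (Multiplicative.toAdd (ι a).1) = 0 := hχι a
    have e2 : χ (Multiplicative.toAdd (c * (ι b)⁻¹).1) = 1 := by
      have hd : Multiplicative.toAdd (c * (ι b)⁻¹).1
          = 1 - fA k hk (Multiplicative.toAdd b.1) := by
        rw [hι_apply]
        simp [c, sub_eq_add_neg]
      rw [hd, map_sub, hχ0, hχ1, sub_zero]
    rw [h, e2] at e1
    exact one_ne_zero e1
  set φ : GenDihedral (Multiplicative (ZMod (2^(k-1))) × A)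
      →* Equiv.Perm (Multiplicative (ZMod (2^k)) × A) := dihPerm ι c with hφ
  have hφinj : Function.Injective φ := dihPerm_injective ι c hι_inj hc
  refine ⟨φ.range, ?_, ⟨(MonoidHom.ofInjective hφinj).symm⟩, ?_⟩
  · -- graph automorphisms
    rintro f hf u v
    obtain ⟨w, rfl⟩ := MonoidHom.mem_range.mp hf
    obtain (a | a) := w
    · show (ι a * v) * (ι a * u)⁻¹ ∈ S ↔ v * u⁻¹ ∈ S
      rw [commFact1]
    · show (c * (ι a)⁻¹ * v⁻¹) * (c * (ι a)⁻¹ * u⁻¹)⁻¹ ∈ S ↔ v * u⁻¹ ∈ S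
      rw [commFact2]
      conv_lhs => rw [← hinv]
      rw [Set.mem_inv, inv_inv]
  · -- regular action
    intro u v
    set g := v * u⁻¹ with hg
    set d := c * (u * v)⁻¹ with hd
    have hgd : χ (Multiplicative.toAdd d.1) + χ (Multiplicative.toAdd g.1) = 1 := by
      have e1 : Multiplicative.toAdd d.1
          = 1 - (Multiplicative.toAdd u.1 + Multiplicative.toAdd v.1) := by
        rw [hd]
        simp only [Prod.fst_mul, Prod.fst_inv, toAdd_mul, toAdd_inv, sub_eq_add_neg]
        rfl
      have e2 : Multiplicative.toAdd g.1
          = Multiplicative.toAdd v.1 - Multiplicative.toAdd u.1 := by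
        rw [hg]
        simp only [Prod.fst_mul, Prod.fst_inv, toAdd_mul, toAdd_inv, sub_eq_add_neg]
      rw [e1, e2, map_sub, map_sub, map_add, hχ1]
      have : ∀ p q : ZMod 2, 1 - (p + q) + (q - p) = 1 := by decide
      exact this _ _
    by_cases hcase : χ (Multiplicative.toAdd g.1) = 0
    · -- translation case
      obtain ⟨x, hx⟩ := hsurj _ hcase
      set a : Multiplicative (ZMod (2^(k-1))) × A := (Multiplicative.ofAdd x, g.2) with ha
      have hag : ι a = g := by
        rw [hι_apply]
        refine Prod.ext ?_ rfl
        show Multiplicative.ofAdd (fA k hk (Multiplicative.toAdd (Multiplicative.ofAdd x))) = g.1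
        rw [toAdd_ofAdd, hx, ofAdd_toAdd]
      refine ⟨⟨φ (.r a), MonoidHom.mem_range.mpr ⟨.r a, rfl⟩⟩, ?_, ?_⟩
      · show ι a * u = v
        rw [hag, hg, inv_mul_cancel_right]
      · rintro ⟨p, hp⟩ hpu
        obtain ⟨w, rfl⟩ := MonoidHom.mem_range.mp hp
        obtain (b | b) := w
        · have hb : ι b * u = v := hpu
          have hb' : ι b = g := by rw [hg, ← hb, mul_inv_cancel_right]
          have : b = a := hι_inj (by rw [hb', hag])
          exact Subtype.ext (congrArg φ (congrArg GenDihedral.r this))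
        · exfalso
          have hb : c * (ι b)⁻¹ * u⁻¹ = v := hpu
          have hb' : ι b = d := commFact3 hb
          have : χ (Multiplicative.toAdd d.1) = 0 := by rw [← hb']; exact hχι b
          rw [this, hcase] at hgd
          exact one_ne_zero hgd.symm
    · -- reflection case
      have hg1 : χ (Multiplicative.toAdd g.1) = 1 := by
        have : ∀ z : ZMod 2, z ≠ 0 → z = 1 := by decide
        exact this _ hcase
      have hd0 : χ (Multiplicative.toAdd d.1) = 0 := by
        rw [hg1] at hgd
        have : ∀ z : ZMod 2, z + 1 = 1 → z = 0 := by decide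
        exact this _ hgd
      obtain ⟨x, hx⟩ := hsurj _ hd0
      set a : Multiplicative (ZMod (2^(k-1))) × A := (Multiplicative.ofAdd x, d.2) with ha
      have hag : ι a = d := by
        rw [hι_apply]
        refine Prod.ext ?_ rfl
        show Multiplicative.ofAdd (fA k hk (Multiplicative.toAdd (Multiplicative.ofAdd x))) = d.1
        rw [toAdd_ofAdd, hx, ofAdd_toAdd]
      refine ⟨⟨φ (.sr a), MonoidHom.mem_range.mpr ⟨.sr a, rfl⟩⟩, ?_, ?_⟩
      · show c * (ι a)⁻¹ * u⁻¹ = v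
        rw [hag, hd]
        exact commFact4 c u v
      · rintro ⟨p, hp⟩ hpu
        obtain ⟨w, rfl⟩ := MonoidHom.mem_range.mp hp
        obtain (b | b) := w
        · exfalso
          have hb : ι b * u = v := hpu
          have hb' : ι b = g := by rw [hg, ← hb, mul_inv_cancel_right]
          have : χ (Multiplicative.toAdd g.1) = 0 := by rw [← hb']; exact hχι b
          exact hcase this
        · have hb : c * (ι b)⁻¹ * u⁻¹ = v := hpu
          have hb' : ι b = d := commFact3 hb
          have : b = a := hι_inj (by rw [hb', hag])
          exact Subtype.ext (congrArg φ (congrArg GenDihedral.sr this))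
end

section
/- Let k ≥ 0 and let Γ be any Cayley graph on the group C₄ × (C₂)^k (with symmetric connection set avoiding the identity). Then Γ is also a Cayley graph on the elementary abelian 2-group (C₂)^{k+2}. -/
section CayleyAux

open Multiplicative

abbrev Gk (k : ℕ) := Multiplicative (ZMod 4) × (Fin k → Multiplicative (ZMod 2))

def iota (x : ZMod 2) : ZMod 4 := 2 * x.val

lemma iota_add : ∀ x y : ZMod 2, iota (x + y) = iota x + iota y := by decide

lemma iota_inj : ∀ x y : ZMod 2, iota x = iota y → x = y := by decide

lemma m2_sq : ∀ s : Multiplicative (ZMod 2), s * s = 1 := by decide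

lemma m2_inv : ∀ s : Multiplicative (ZMod 2), s⁻¹ = s := by decide

lemma m2_sq_add : ∀ x : ZMod 2, x + x = 0 := by decide

lemma iota_zero : iota 0 = 0 := by decide

lemma m2_cases : ∀ s : Multiplicative (ZMod 2), s = 1 ∨ s = ofAdd 1 := by decide

def gElt (k : ℕ) : Gk k := (ofAdd 1, 1)

def aElt {k : ℕ} (h : Fin (k + 2) → Multiplicative (ZMod 2)) : Gk k :=
  (ofAdd (iota (toAdd (h 1))), fun i => h i.succ.succ)

lemma aElt_sq {k : ℕ} (h : Fin (k + 2) → Multiplicative (ZMod 2)) :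
    aElt h * aElt h = (1 : Gk k) := by
  refine Prod.ext ?_ ?_
  · show ofAdd (iota (toAdd (h 1))) * ofAdd (iota (toAdd (h 1))) = 1
    rw [← ofAdd_add, ← iota_add, m2_sq_add, iota_zero, ofAdd_zero]
  · funext i
    exact m2_sq _

def fMap {k : ℕ} (h : Fin (k + 2) → Multiplicative (ZMod 2)) (x : Gk k) : Gk k :=
  if h 0 = 1 then aElt h * x else aElt h * (gElt k * x⁻¹)

lemma aElt_inv {k : ℕ} (h : Fin (k + 2) → Multiplicative (ZMod 2)) :
    (aElt h)⁻¹ = aElt h := inv_eq_of_mul_eq_one_right (aElt_sq h)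

lemma comm_aux1 {A : Type*} [CommGroup A] (a g x : A) (ha : a⁻¹ = a) (ha2 : a * a = 1) :
    a * (g * (a * (g * x⁻¹))⁻¹) = x := by
  simp only [mul_inv_rev, inv_inv, ha]
  rw [show g * (x * g⁻¹ * a) = a * (g * g⁻¹ * x) by
    simp [mul_comm, mul_left_comm, mul_assoc], mul_inv_cancel, one_mul, ← mul_assoc, ha2, one_mul]

lemma fMap_invol {k : ℕ} (h : Fin (k + 2) → Multiplicative (ZMod 2)) :
    Function.Involutive (fMap h) := by
  intro x
  unfold fMap
  by_cases h0 : h 0 = 1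
  · simp only [if_pos h0, ← mul_assoc, aElt_sq, one_mul]
  · simp only [if_neg h0]
    exact comm_aux1 _ _ _ (aElt_inv h) (aElt_sq h)

lemma aElt_mul {k : ℕ} (h h' : Fin (k + 2) → Multiplicative (ZMod 2)) :
    aElt (h * h') = aElt h * aElt h' := by
  refine Prod.ext ?_ ?_
  · show ofAdd (iota (toAdd ((h * h') 1))) = ofAdd (iota (toAdd (h 1))) * ofAdd (iota (toAdd (h' 1)))
    rw [← ofAdd_add, ← iota_add]
    rfl
  · rfl

lemma comm_aux2 {A : Type*} [CommGroup A] (a b g x : A) (hb : b⁻¹ = b) :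
    a * b * (g * x⁻¹) = a * (g * (b * x)⁻¹) := by
  simp [mul_inv_rev, hb, mul_comm, mul_left_comm, mul_assoc]

lemma comm_aux3 {A : Type*} [CommGroup A] (a b g x : A) (hb : b⁻¹ = b) :
    a * b * x = a * (g * (b * (g * x⁻¹))⁻¹) := by
  simp [mul_inv_rev, hb, mul_comm, mul_left_comm, mul_assoc]

def phi (k : ℕ) : (Fin (k + 2) → Multiplicative (ZMod 2)) →* Equiv.Perm (Gk k) where
  toFun h := (fMap_invol h).toPerm
  map_one' := by
    refine Equiv.ext fun x => ?_
    show fMap 1 x = x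
    unfold fMap
    have hc : (1 : Fin (k + 2) → Multiplicative (ZMod 2)) 0 = 1 := rfl
    rw [if_pos hc]
    have : aElt (1 : Fin (k + 2) → Multiplicative (ZMod 2)) = 1 := by
      refine Prod.ext ?_ rfl
      show ofAdd (iota (toAdd (1 : Multiplicative (ZMod 2)))) = 1
      decide
    rw [this, one_mul]
  map_mul' := by
    intro h h'
    refine Equiv.ext fun x => ?_
    show fMap (h * h') x = fMap h (fMap h' x)
    have hp : (h * h') 0 = h 0 * h' 0 := rfl
    unfold fMap
    by_cases h0 : h 0 = 1 <;> by_cases h0' : h' 0 = 1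
    · rw [if_pos h0, if_pos h0', if_pos (by rw [hp, h0, h0', one_mul]), aElt_mul, mul_assoc]
    · rw [if_pos h0, if_neg h0', if_neg (by rw [hp, h0, one_mul]; exact h0'), aElt_mul, mul_assoc]
    · rw [if_neg h0, if_pos h0', if_neg (by rw [hp, h0', mul_one]; exact h0), aElt_mul]
      exact comm_aux2 _ _ _ _ (aElt_inv h')
    · have hflip : (h * h') 0 = 1 := by
        rw [hp]
        rcases m2_cases (h 0) with e | e; · exact absurd e h0
        rcases m2_cases (h' 0) with e' | e'; · exact absurd e' h0'
        rw [e, e']; decide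
      rw [if_pos hflip, if_neg h0, if_neg h0', aElt_mul]
      exact comm_aux3 _ _ _ _ (aElt_inv h')

lemma comm_diff1 {A : Type*} [CommGroup A] (a u v : A) :
    (a * v) * (a * u)⁻¹ = v * u⁻¹ := by
  rw [mul_inv_rev, mul_comm a v, mul_assoc, mul_comm u⁻¹ a⁻¹, mul_inv_cancel_left]

lemma comm_diff2 {A : Type*} [CommGroup A] (a g u v : A) :
    (a * (g * v⁻¹)) * (a * (g * u⁻¹))⁻¹ = (v * u⁻¹)⁻¹ := by
  rw [comm_diff1, comm_diff1, inv_inv, mul_inv_rev, inv_inv, mul_comm]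

lemma fMap_diff {k : ℕ} (h : Fin (k + 2) → Multiplicative (ZMod 2)) (u v : Gk k) :
    fMap h v * (fMap h u)⁻¹ = if h 0 = 1 then v * u⁻¹ else (v * u⁻¹)⁻¹ := by
  unfold fMap
  by_cases h0 : h 0 = 1
  · rw [if_pos h0, if_pos h0, if_pos h0]; exact comm_diff1 _ _ _
  · rw [if_neg h0, if_neg h0, if_neg h0]; exact comm_diff2 _ _ _ _

lemma funext_fin2 {k : ℕ} {h h' : Fin (k + 2) → Multiplicative (ZMod 2)}
    (e0 : h 0 = h' 0) (e1 : h 1 = h' 1)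
    (et : ∀ j : Fin k, h j.succ.succ = h' j.succ.succ) : h = h' := by
  funext i
  refine Fin.cases e0 (fun j => ?_) i
  refine Fin.cases ?_ (fun m => et m) j
  simpa [Fin.succ_zero_eq_one] using e1

lemma aElt_inj {k : ℕ} {h h' : Fin (k + 2) → Multiplicative (ZMod 2)}
    (e0 : h 0 = h' 0) (ea : aElt h = aElt h') : h = h' := by
  refine funext_fin2 e0 ?_ ?_
  · have := congrArg Prod.fst ea
    have : iota (toAdd (h 1)) = iota (toAdd (h' 1)) := by
      simpa [aElt] using this
    have := iota_inj _ _ this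
    exact toAdd.injective this
  · intro j
    exact congrFun (congrArg Prod.snd ea) j

lemma parity_ne : ∀ (t t' : ZMod 2) (w : ZMod 4),
    ¬ (iota t + w = iota t' + (1 + -w)) := by decide

lemma first_comp_flip_ne {k : ℕ} (h h' : Fin (k + 2) → Multiplicative (ZMod 2)) (u : Gk k) :
    aElt h * u ≠ aElt h' * (gElt k * u⁻¹) := by
  intro e
  have e1 := congrArg (fun z : Gk k => toAdd z.1) e
  simp only [aElt, gElt, Prod.fst_mul, Prod.fst_inv, toAdd_mul, toAdd_inv, toAdd_ofAdd] at e1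
  exact parity_ne _ _ _ e1

lemma fMap_eval_inj {k : ℕ} {h h' : Fin (k + 2) → Multiplicative (ZMod 2)} (u : Gk k)
    (e : fMap h u = fMap h' u) : h = h' := by
  unfold fMap at e
  by_cases h0 : h 0 = 1 <;> by_cases h0' : h' 0 = 1
  · rw [if_pos h0, if_pos h0'] at e
    exact aElt_inj (h0.trans h0'.symm) (mul_right_cancel e)
  · rw [if_pos h0, if_neg h0'] at e
    exact absurd e (first_comp_flip_ne h h' u)
  · rw [if_neg h0, if_pos h0'] at e
    exact absurd e.symm (first_comp_flip_ne h' h u)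
  · rw [if_neg h0, if_neg h0'] at e
    have e0 : h 0 = h' 0 := by
      rcases m2_cases (h 0) with e | e; · exact absurd e h0
      rcases m2_cases (h' 0) with e' | e'; · exact absurd e' h0'
      rw [e, e']
    exact aElt_inj e0 (mul_right_cancel e)

lemma parity_exists : ∀ (a b : ZMod 4),
    (∃ t : ZMod 2, iota t + b = a) ∨ (∃ t : ZMod 2, iota t + (1 + -b) = a) := by decide

lemma exists_fMap {k : ℕ} (u v : Gk k) :
    ∃ h : Fin (k + 2) → Multiplicative (ZMod 2), fMap h u = v := by
  have h1e : ∀ (b0 b1 : Multiplicative (ZMod 2)) (t : Fin k → Multiplicative (ZMod 2)),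
      (Fin.cons b0 (Fin.cons b1 t) : Fin (k + 2) → Multiplicative (ZMod 2)) 1 = b1 := by
    intro b0 b1 t
    rw [show (1 : Fin (k + 2)) = Fin.succ 0 from (Fin.succ_zero_eq_one).symm, Fin.cons_succ,
      Fin.cons_zero]
  have hte : ∀ (b0 b1 : Multiplicative (ZMod 2)) (t : Fin k → Multiplicative (ZMod 2)) (j : Fin k),
      (Fin.cons b0 (Fin.cons b1 t) : Fin (k + 2) → Multiplicative (ZMod 2)) j.succ.succ = t j := by
    intro b0 b1 t j
    rw [Fin.cons_succ, Fin.cons_succ]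
  set tl : Fin k → Multiplicative (ZMod 2) := fun i => v.2 i * u.2 i with htl
  have hsnd : ∀ (b0 b1 : Multiplicative (ZMod 2)),
      (aElt (Fin.cons b0 (Fin.cons b1 tl))).2 = tl := by
    intro b0 b1; funext j; exact hte b0 b1 tl j
  rcases parity_exists (toAdd v.1) (toAdd u.1) with ⟨t, ht⟩ | ⟨t, ht⟩
  · refine ⟨Fin.cons 1 (Fin.cons (ofAdd t) tl), ?_⟩
    unfold fMap
    rw [if_pos (Fin.cons_zero _ _)]
    refine Prod.ext ?_ ?_
    · show ofAdd (iota (toAdd ((Fin.cons 1 (Fin.cons (ofAdd t) tl) : Fin (k+2) → _) 1))) * u.1 = v.1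
      rw [h1e]
      apply toAdd.injective
      simpa using ht
    · funext j
      show tl j * u.2 j = v.2 j
      rw [htl]
      simp only [mul_assoc, m2_sq, mul_one]
  · refine ⟨Fin.cons (ofAdd 1) (Fin.cons (ofAdd t) tl), ?_⟩
    unfold fMap
    rw [if_neg (by rw [Fin.cons_zero]; decide)]
    refine Prod.ext ?_ ?_
    · show ofAdd (iota (toAdd ((Fin.cons (ofAdd 1) (Fin.cons (ofAdd t) tl) : Fin (k+2) → _) 1))) *
        (ofAdd 1 * u.1⁻¹) = v.1
      rw [h1e]
      apply toAdd.injective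
      simpa using ht
    · funext j
      show tl j * ((1 : Fin k → Multiplicative (ZMod 2)) j * (u.2 j)⁻¹) = v.2 j
      rw [htl, m2_inv]
      simp only [Pi.one_apply, one_mul, mul_assoc, m2_sq, mul_one]

lemma phi_inj (k : ℕ) : Function.Injective (phi k) := by
  intro h h' e
  refine fMap_eval_inj (1 : Gk k) ?_
  exact congrArg (fun p : Equiv.Perm (Gk k) => p 1) e

end CayleyAux

/-- Every Cayley graph on `C₄ × (C₂)^k` (with symmetric connection set
avoiding the identity) is also a Cayley graph on the elementary abelian 2-group
`(C₂)^(k+2)`. -/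
theorem cayley_on_C4_times_elemAbelian_isCayley_on_elemAbelian
    (k : ℕ)
    (S : Set (Multiplicative (ZMod 4) × (Fin k → Multiplicative (ZMod 2))))
    (h1 : (1 : Multiplicative (ZMod 4) × (Fin k → Multiplicative (ZMod 2))) ∉ S)
    (hinv : S⁻¹ = S) :
    IsCayleyGraphOn (cayleyGraph S h1 hinv) (Fin (k + 2) → Multiplicative (ZMod 2)) := by
  refine ⟨(phi k).range, ?_, ⟨(MonoidHom.ofInjective (phi_inj k)).symm⟩, ?_⟩
  · rintro f ⟨h, rfl⟩ u v
    show fMap h v * (fMap h u)⁻¹ ∈ S ↔ v * u⁻¹ ∈ S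
    rw [fMap_diff]
    by_cases h0 : h 0 = 1
    · rw [if_pos h0]
    · rw [if_neg h0]
      constructor
      · intro hm
        have : ((v * u⁻¹)⁻¹)⁻¹ ∈ S⁻¹ := Set.inv_mem_inv.mpr hm
        rw [hinv] at this
        simpa using this
      · intro hm
        have : (v * u⁻¹)⁻¹ ∈ S⁻¹ := Set.inv_mem_inv.mpr hm
        rwa [hinv] at this
  · intro u v
    obtain ⟨h, hh⟩ := exists_fMap u v
    refine ⟨⟨phi k h, ⟨h, rfl⟩⟩, hh, ?_⟩
    rintro ⟨f, hf⟩ hfu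
    obtain ⟨h', rfl⟩ := hf
    have : h' = h := fMap_eval_inj u (hfu.trans hh.symm)
    exact Subtype.ext (by rw [this])
end

section
/- Let A be a finite abelian group and let D = Dih(A) with distinguished involution x, so that xA is the non-identity coset of A in D. Let S ⊆ D satisfy S = S⁻¹ and 1 ∉ S, and let Γ = Cay(D, S). Suppose there is some y ∈ xA such that for every a ∈ A: y·a ∈ S ∩ xA if and only if y·a⁻¹ ∈ S ∩ xA. Then Γ is also a Cayley graph on the abelian group A × C₂. -/
namespace GenDihedralCayleyAux

variable {A : Type*} [CommGroup A]

def sigmaFun (c : A) : GenDihedral A → GenDihedral A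
  | .r a => .sr (c * a)
  | .sr b => .r (c⁻¹ * b)

lemma sigma_involutive (c : A) : Function.Involutive (sigmaFun c) := by
  rintro (a | a) <;> simp [sigmaFun, inv_mul_cancel_left, mul_inv_cancel_left]

def sigma (c : A) : Equiv.Perm (GenDihedral A) := (sigma_involutive c).toPerm

@[simp] lemma sigma_r (c a : A) : sigma c (.r a) = .sr (c * a) := rfl
@[simp] lemma sigma_sr (c a : A) : sigma c (.sr a) = .r (c⁻¹ * a) := rfl

def rho (a : A) : Equiv.Perm (GenDihedral A) := Equiv.mulRight (GenDihedral.r a)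

@[simp] lemma rho_apply (a : A) (u : GenDihedral A) : rho a u = u * .r a := rfl

lemma sigma_sq (c : A) : sigma c ^ 2 = 1 := by
  ext u
  have := sigma_involutive c u
  simpa [sq, sigma] using this

lemma rho_one : rho (1 : A) = 1 := by
  ext u
  simp

lemma rho_mul (a b : A) : rho (a * b) = rho a * rho b := by
  ext u
  simp [mul_assoc, mul_comm a b]

lemma sigma_comm_rho (c a : A) : Commute (sigma c) (rho a) := by
  show sigma c * rho a = rho a * sigma c
  ext u
  rcases u with b | b <;>
    simp [Equiv.Perm.mul_apply, mul_assoc]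

def phi (c : A) : (A × Multiplicative (ZMod 2)) →* Equiv.Perm (GenDihedral A) where
  toFun p := rho p.1 * (sigma c) ^ (Multiplicative.toAdd p.2).val
  map_one' := by
    simp [rho_one]
  map_mul' p q := by
    have hval : (sigma c) ^ (Multiplicative.toAdd (p * q).2).val =
        (sigma c) ^ (Multiplicative.toAdd p.2).val * (sigma c) ^ (Multiplicative.toAdd q.2).val := by
      rw [← pow_add]
      have h2 : Multiplicative.toAdd (p * q).2 = Multiplicative.toAdd p.2 + Multiplicative.toAdd q.2 := rfl
      rw [h2, ZMod.val_add]
      exact (pow_eq_pow_mod _ (sigma_sq c)).symm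
    show rho (p.1 * q.1) * _ = _
    rw [rho_mul, hval]
    have hc : Commute ((sigma c) ^ (Multiplicative.toAdd p.2).val) (rho q.1) :=
      (sigma_comm_rho c q.1).pow_left _
    rw [mul_assoc, mul_assoc, ← mul_assoc ((sigma c) ^ (Multiplicative.toAdd p.2).val),
      hc.eq, mul_assoc]

end GenDihedralCayleyAux

/-- **Morris–Smolčić.** Let `A` be a finite abelian group and `D = Dih(A)`,
whose non-identity coset of `A` is `xA = {sr a : a ∈ A}`. Let `Γ = Cay(D, S)` with `S`
symmetric and avoiding the identity. If there is `y ∈ xA` such that for every `a ∈ A`,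
`y·a ∈ S ∩ xA ↔ y·a⁻¹ ∈ S ∩ xA`, then `Γ` is also a Cayley graph on the abelian group
`A × C₂`. -/
theorem cayley_on_genDihedral_isCayley_on_abelian_times_C2
    (A : Type*) [CommGroup A] [Finite A]
    (S : Set (GenDihedral A)) (h1 : (1 : GenDihedral A) ∉ S) (hinv : S⁻¹ = S)
    (y : GenDihedral A) (hy : y ∈ Set.range GenDihedral.sr)
    (hcond : ∀ a : A,
      y * GenDihedral.r a ∈ S ∩ Set.range GenDihedral.sr ↔
      y * GenDihedral.r a⁻¹ ∈ S ∩ Set.range GenDihedral.sr) :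
    IsCayleyGraphOn (cayleyGraph S h1 hinv) (A × Multiplicative (ZMod 2)) := by
  classical
  open GenDihedral GenDihedralCayleyAux in
  obtain ⟨c, rfl⟩ := hy
  -- basic facts
  have hSinv : ∀ s : GenDihedral A, s ∈ S ↔ s⁻¹ ∈ S := by
    intro s
    conv_lhs => rw [← hinv]
    exact Set.mem_inv
  have hmem : ∀ x : A, GenDihedral.sr x ∈ Set.range (GenDihedral.sr (A := A)) :=
    fun x => ⟨x, rfl⟩
  have hS : ∀ b : A, GenDihedral.sr b ∈ S ↔ GenDihedral.sr (c * c * b⁻¹) ∈ S := by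
    intro b
    have h := hcond (c⁻¹ * b)
    have e1 : GenDihedral.sr c * GenDihedral.r (c⁻¹ * b) = GenDihedral.sr b := by
      simp [mul_inv_cancel_left]
    have e2 : GenDihedral.sr c * GenDihedral.r (c⁻¹ * b)⁻¹ = GenDihedral.sr (c * c * b⁻¹) := by
      simp only [GenDihedral.sr_mul_r]
      congr 1
      simp [mul_inv_rev, mul_comm, mul_left_comm, mul_assoc]
    rw [e1, e2] at h
    constructor
    · intro hb; exact (h.mp ⟨hb, hmem b⟩).1
    · intro hb; exact (h.mpr ⟨hb, hmem _⟩).1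
  have adj_def : ∀ u v : GenDihedral A,
      (cayleyGraph S h1 hinv).Adj u v ↔ v * u⁻¹ ∈ S := fun u v => Iff.rfl
  -- sigma preserves adjacency
  have hadjσ : ∀ u v : GenDihedral A,
      (cayleyGraph S h1 hinv).Adj (sigma c u) (sigma c v) ↔ (cayleyGraph S h1 hinv).Adj u v := by
    rintro (a | a) (b | b) <;>
      simp only [adj_def, sigma_r, sigma_sr, GenDihedral.inv_r, GenDihedral.inv_sr,
        GenDihedral.r_mul_r, GenDihedral.sr_mul_sr, GenDihedral.r_mul_sr, GenDihedral.sr_mul_r]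
    · have e : c * a * (c * b)⁻¹ = (b * a⁻¹)⁻¹ := by
        rw [mul_inv_rev, mul_inv_rev, inv_inv, mul_comm b⁻¹ c⁻¹, ← mul_assoc, mul_assoc c a c⁻¹,
          mul_comm a c⁻¹, ← mul_assoc, mul_inv_cancel, one_mul]
      rw [e, ← GenDihedral.inv_r]
      exact (hSinv _).symm
    · have e : c * a * (c⁻¹ * b)⁻¹ = c * c * (b * a⁻¹)⁻¹ := by
        simp only [mul_inv_rev, inv_inv]
        simp [mul_comm, mul_left_comm, mul_assoc]
      rw [e]
      exact (hS (b * a⁻¹)).symm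
    · have e : c * b * (c⁻¹ * a)⁻¹ = c * c * (a * b⁻¹)⁻¹ := by
        simp only [mul_inv_rev, inv_inv]
        simp [mul_comm, mul_left_comm, mul_assoc]
      rw [e]
      exact (hS (a * b⁻¹)).symm
    · have e : c⁻¹ * b * (c⁻¹ * a)⁻¹ = (a * b⁻¹)⁻¹ := by
        rw [mul_inv_rev, mul_inv_rev, inv_inv, inv_inv, mul_comm a⁻¹ c, ← mul_assoc,
          mul_assoc c⁻¹ b c, mul_comm b c, ← mul_assoc, inv_mul_cancel, one_mul]
      rw [e, ← GenDihedral.inv_r]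
      exact (hSinv _).symm
  -- rho preserves adjacency
  have hadjρ : ∀ (a : A) (u v : GenDihedral A),
      (cayleyGraph S h1 hinv).Adj (u * GenDihedral.r a) (v * GenDihedral.r a) ↔
        (cayleyGraph S h1 hinv).Adj u v := by
    intro a u v
    rw [adj_def, adj_def]
    have : v * GenDihedral.r a * (u * GenDihedral.r a)⁻¹ = v * u⁻¹ := by group
    rw [this]
  have htwo : ∀ x : ZMod 2, x = 0 ∨ x = 1 := by decide
  have hact : ∀ (a : A) (t : Multiplicative (ZMod 2)) (u : GenDihedral A),
      phi c (a, t) u = (sigma c ^ (Multiplicative.toAdd t).val) u * GenDihedral.r a :=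
    fun a t u => rfl
  -- fixed points are trivial
  have hfix : ∀ (p : A × Multiplicative (ZMod 2)) (u : GenDihedral A),
      phi c p u = u → p = 1 := by
    rintro ⟨a, t⟩ u hu
    rcases htwo (Multiplicative.toAdd t) with h | h
    · have hv : (Multiplicative.toAdd t).val = 0 := by rw [h]; rfl
      rw [hact, hv, pow_zero] at hu
      have ha : a = 1 := by
        have : u * GenDihedral.r a = u * 1 := by simpa using hu
        have := mul_left_cancel this
        simpa using this
      have ht : t = 1 := by
        have : t = Multiplicative.ofAdd (Multiplicative.toAdd t) := rfl
        rw [this, h]; rfl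
      rw [ha, ht]
      rfl
    · have hv : (Multiplicative.toAdd t).val = 1 := by rw [h]; rfl
      rw [hact, hv, pow_one] at hu
      rcases u with b | b <;> simp at hu
  have hinj : Function.Injective (phi c) := by
    rw [injective_iff_map_eq_one]
    intro p hp
    apply hfix p (GenDihedral.r 1)
    rw [hp]; rfl
  have h0 : (Multiplicative.toAdd (1 : Multiplicative (ZMod 2))).val = 0 := rfl
  have h1' : (Multiplicative.toAdd (Multiplicative.ofAdd (1 : ZMod 2))).val = 1 := rfl
  refine ⟨(phi c).range, ?_, ⟨(MonoidHom.ofInjective hinj).symm⟩, ?_⟩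
  · rintro f ⟨⟨a, t⟩, rfl⟩ u v
    rcases htwo (Multiplicative.toAdd t) with h | h
    · have hv : (Multiplicative.toAdd t).val = 0 := by rw [h]; rfl
      rw [hact, hact, hv, pow_zero]
      simpa using hadjρ a u v
    · have hv : (Multiplicative.toAdd t).val = 1 := by rw [h]; rfl
      rw [hact, hact, hv, pow_one, hadjρ]
      exact hadjσ u v
  · intro u v
    have key : ∀ f : (phi c).range, (f : Equiv.Perm (GenDihedral A)) u = v →
        ∀ g : (phi c).range, (g : Equiv.Perm (GenDihedral A)) u = v → g = f := by
      intro f hf g hg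
      obtain ⟨p, hp⟩ := (g⁻¹ * f).2
      have hfixu : ((g⁻¹ * f : (phi c).range) : Equiv.Perm (GenDihedral A)) u = u := by
        have e : ((g⁻¹ * f : (phi c).range) : Equiv.Perm (GenDihedral A)) u
            = ((g : Equiv.Perm (GenDihedral A))⁻¹) ((f : Equiv.Perm (GenDihedral A)) u) := rfl
        rw [e, hf, ← hg]
        exact Equiv.symm_apply_apply _ _
      have hp1 : p = 1 := hfix p u (by rw [hp]; exact hfixu)
      have hone : ((g⁻¹ * f : (phi c).range) : Equiv.Perm (GenDihedral A)) = 1 := by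
        rw [← hp, hp1, map_one]
      have : g⁻¹ * f = 1 := Subtype.ext hone
      rw [inv_mul_eq_one] at this
      exact this
    obtain ⟨f₀, hf₀⟩ : ∃ f : (phi c).range, (f : Equiv.Perm (GenDihedral A)) u = v := by
      rcases u with b | b <;> rcases v with d | d
      · refine ⟨⟨phi c (b⁻¹ * d, 1), ⟨_, rfl⟩⟩, ?_⟩
        show phi c (b⁻¹ * d, 1) (GenDihedral.r b) = GenDihedral.r d
        rw [hact, h0, pow_zero]
        simp [mul_inv_cancel_left]
      · refine ⟨⟨phi c ((c * b)⁻¹ * d, Multiplicative.ofAdd 1), ⟨_, rfl⟩⟩, ?_⟩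
        show phi c ((c * b)⁻¹ * d, Multiplicative.ofAdd 1) (GenDihedral.r b) = GenDihedral.sr d
        rw [hact, h1', pow_one]
        simp [mul_assoc]
      · refine ⟨⟨phi c ((c⁻¹ * b)⁻¹ * d, Multiplicative.ofAdd 1), ⟨_, rfl⟩⟩, ?_⟩
        show phi c ((c⁻¹ * b)⁻¹ * d, Multiplicative.ofAdd 1) (GenDihedral.sr b) = GenDihedral.r d
        rw [hact, h1', pow_one]
        simp [mul_assoc]
      · refine ⟨⟨phi c (b⁻¹ * d, 1), ⟨_, rfl⟩⟩, ?_⟩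
        show phi c (b⁻¹ * d, 1) (GenDihedral.sr b) = GenDihedral.sr d
        rw [hact, h0, pow_zero]
        simp [mul_inv_cancel_left]
    exact ⟨f₀, hf₀, fun g hg => key f₀ hf₀ g hg⟩
end

section
/- Let k ≥ 0, let A be a finite abelian group, and let G = ⟨c⟩ × A be a finite abelian group where c has order 2^k. Let D = Dih(G) with distinguished involution x, let S ⊆ D satisfy S = S⁻¹ and 1 ∉ S, and let Γ = Cay(D, S). Suppose there exists y ∈ xG such that for every g ∈ G: y·g ∈ S ∩ xG if and only if y·g⁻¹·c ∈ S ∩ xG. Then Γ is a Cayley graph on the abelian group C_{2^{k+1}} × A. -/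
/-- The cyclic group of order `2^k`, written multiplicatively. -/
abbrev CycTwoPow (k : ℕ) := Multiplicative (ZMod (2 ^ k))

/-- A generator `c` of `C_{2^k}`; it has order `2^k`. -/
def cGen (k : ℕ) : CycTwoPow k := Multiplicative.ofAdd 1

/-- The element `c = (c, 1)` of `G = ⟨c⟩ × A`. -/
def cElt (k : ℕ) (A : Type*) [CommGroup A] : CycTwoPow k × A := (cGen k, 1)
section Aux

namespace CayAux

open GenDihedral Equiv

variable {k : ℕ} {A : Type*} [CommGroup A]

abbrev D (k : ℕ) (A : Type*) [CommGroup A] := GenDihedral (CycTwoPow k × A)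

/-- the square-root-of-`c⁻¹` automorphism candidate -/
def phi (k : ℕ) (A : Type*) [CommGroup A] (a : CycTwoPow k × A) : Equiv.Perm (D k A) where
  toFun u := match u with
    | .r g => .sr (a * g)
    | .sr h => .r (a⁻¹ * h * (cElt k A)⁻¹)
  invFun u := match u with
    | .r g => .sr (a * g * cElt k A)
    | .sr h => .r (a⁻¹ * h)
  left_inv := by rintro (g | h) <;> simp <;> group
  right_inv := by rintro (g | h) <;> simp <;> group

@[simp] lemma phi_r (a g : CycTwoPow k × A) : phi k A a (.r g) = .sr (a * g) := rfl
@[simp] lemma phi_sr (a h : CycTwoPow k × A) :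
    phi k A a (.sr h) = .r (a⁻¹ * h * (cElt k A)⁻¹) := rfl

/-- right translations -/
def rho (k : ℕ) (A : Type*) [CommGroup A] : (CycTwoPow k × A) →* Equiv.Perm (D k A) where
  toFun t := Equiv.mulRight (GenDihedral.r t)
  map_one' := by ext u; simp
  map_mul' s t := by
    ext u
    simp [Equiv.Perm.mul_apply, mul_assoc, mul_comm s t]

@[simp] lemma rho_apply (t : CycTwoPow k × A) (u : D k A) :
    rho k A t u = u * .r t := rfl

lemma phi_sq (a : CycTwoPow k × A) : phi k A a ^ 2 = rho k A ((cElt k A)⁻¹) := by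
  ext u
  rcases u with g | h <;>
    simp [pow_succ, Equiv.Perm.mul_apply, mul_assoc, inv_mul_cancel_left, -map_inv]

lemma phi_comm_rho (a t : CycTwoPow k × A) : Commute (phi k A a) (rho k A t) := by
  ext u
  rcases u with g | h <;>
    simp [Equiv.Perm.mul_apply, mul_assoc, mul_comm, mul_left_comm]

lemma cElt_pow_card : (cElt k A) ^ (2 ^ k) = 1 := by
  have : (cGen k) ^ (2 ^ k) = 1 := by
    show Multiplicative.ofAdd (1 : ZMod (2^k)) ^ (2^k) = 1
    rw [← ofAdd_nsmul]
    simp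
  simp [cElt, Prod.pow_mk, this, Prod.ext_iff]

lemma phi_pow_order (a : CycTwoPow k × A) : phi k A a ^ (2 ^ (k + 1)) = 1 := by
  have : (2 : ℕ) ^ (k + 1) = 2 * 2 ^ k := by ring
  rw [this, pow_mul, phi_sq, ← map_pow, inv_pow, cElt_pow_card]
  simp


variable (k A) in
/-- homomorphism `C_{2^{k+1}} →* Perm D` sending the generator to `phi` -/
def chi (a : CycTwoPow k × A) : Multiplicative (ZMod (2 ^ (k + 1))) →* Equiv.Perm (D k A) :=
  AddMonoidHom.toMultiplicativeLeft
    (ZMod.lift (2 ^ (k + 1))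
      ⟨zmultiplesHom (Additive (Equiv.Perm (D k A))) (Additive.ofMul (phi k A a)), by
        show ((2 ^ (k+1) : ℕ) : ℤ) • Additive.ofMul (phi k A a) = 0
        rw [← ofMul_zpow, zpow_natCast, phi_pow_order]
        rfl⟩)

lemma chi_natCast (a : CycTwoPow k × A) (j : ℕ) :
    chi k A a (Multiplicative.ofAdd ((j : ZMod (2 ^ (k + 1))))) = phi k A a ^ j := by
  have h : ((j : ℤ) : ZMod (2 ^ (k + 1))) = (j : ZMod (2 ^ (k+1))) := by push_cast; rfl
  rw [← h]
  simp only [chi, AddMonoidHom.coe_toMultiplicativeLeft, Function.comp_apply,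
    toAdd_ofAdd, ZMod.lift_coe, zmultiplesHom_apply, ← ofMul_zpow,
    zpow_natCast, toMul_ofMul]

lemma exists_nat (i : Multiplicative (ZMod (2 ^ (k + 1)))) :
    ∃ j : ℕ, j < 2 ^ (k + 1) ∧ i = Multiplicative.ofAdd ((j : ZMod (2 ^ (k + 1)))) := by
  haveI : NeZero (2 ^ (k + 1)) := ⟨by positivity⟩
  exact ⟨(Multiplicative.toAdd i).val, ZMod.val_lt _, by rw [ZMod.natCast_zmod_val]; simp⟩

variable (k A) in
/-- the regular abelian subgroup generator map -/
def psi (a : CycTwoPow k × A) :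
    (Multiplicative (ZMod (2 ^ (k + 1))) × A) →* Equiv.Perm (D k A) :=
  (chi k A a).noncommCoprod ((rho k A).comp (MonoidHom.inr (CycTwoPow k) A)) (by
    intro i b
    obtain ⟨j, -, rfl⟩ := exists_nat i
    rw [chi_natCast]
    exact ((phi_comm_rho a ((1 : CycTwoPow k), b)).pow_left j))

lemma psi_apply (a : CycTwoPow k × A) (i : Multiplicative (ZMod (2 ^ (k + 1)))) (b : A) :
    psi k A a (i, b) = chi k A a i * rho k A ((1 : CycTwoPow k), b) :=
  MonoidHom.noncommCoprod_apply _ _ _ _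

lemma psi_even (a : CycTwoPow k × A) (m : ℕ) (b : A) :
    psi k A a (Multiplicative.ofAdd (((2 * m : ℕ) : ZMod (2 ^ (k + 1)))), b) =
      rho k A (((1 : CycTwoPow k), b) * ((cElt k A)⁻¹) ^ m) := by
  rw [psi_apply, chi_natCast, pow_mul, phi_sq, ← map_pow, ← map_mul, mul_comm]

lemma psi_odd (a : CycTwoPow k × A) (m : ℕ) (b : A) :
    psi k A a (Multiplicative.ofAdd (((2 * m + 1 : ℕ) : ZMod (2 ^ (k + 1)))), b) =
      phi k A a * rho k A (((1 : CycTwoPow k), b) * ((cElt k A)⁻¹) ^ m) := by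
  rw [psi_apply, chi_natCast, pow_succ, pow_mul, phi_sq, ← map_pow,
    ← (phi_comm_rho a (((cElt k A)⁻¹) ^ m)).eq, mul_assoc, ← map_mul,
    mul_comm ((cElt k A)⁻¹ ^ m)]

lemma solve (t : CycTwoPow k × A) :
    ∃ m : ℕ, ∃ b : A, ((1 : CycTwoPow k), b) * ((cElt k A)⁻¹) ^ m = t := by
  haveI : NeZero (2 ^ k) := ⟨by positivity⟩
  refine ⟨(-(Multiplicative.toAdd t.1)).val, t.2, ?_⟩
  have h1 : ((cGen k)⁻¹) ^ ((-(Multiplicative.toAdd t.1)).val) = t.1 := by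
    show (Multiplicative.ofAdd (1 : ZMod (2 ^ k)))⁻¹ ^ _ = t.1
    rw [← ofAdd_neg, ← ofAdd_nsmul]
    have : ((-(Multiplicative.toAdd t.1)).val : ℕ) • (-1 : ZMod (2 ^ k)) =
        Multiplicative.toAdd t.1 := by
      rw [smul_neg, nsmul_eq_mul, mul_one, ZMod.natCast_zmod_val, neg_neg]
    rw [this]
    rfl
  refine Prod.ext ?_ ?_
  · simpa [cElt] using h1
  · simp [cElt]

lemma stab (a : CycTwoPow k × A) (p : Multiplicative (ZMod (2 ^ (k + 1))) × A)
    (u : D k A) (h : psi k A a p u = u) : p = 1 := by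
  obtain ⟨i, b⟩ := p
  obtain ⟨j, hj, rfl⟩ := exists_nat i
  rcases Nat.even_or_odd j with ⟨m, hm⟩ | ⟨m, hm⟩
  · have hm' : j = 2 * m := by omega
    subst hm'
    rw [psi_even, rho_apply] at h
    have h2 : (GenDihedral.r (((1 : CycTwoPow k), b) * ((cElt k A)⁻¹) ^ m) : D k A) = 1 :=
      mul_eq_left.mp h
    have h3 : ((1 : CycTwoPow k), b) * ((cElt k A)⁻¹) ^ m = 1 := by
      simpa [GenDihedral.one_def] using h2
    have hb : b = 1 := by
      have := congrArg Prod.snd h3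
      simpa [cElt] using this
    have hc : ((cGen k)⁻¹) ^ m = 1 := by
      have := congrArg Prod.fst h3
      simpa [cElt] using this
    have hmz : ((m : ℕ) : ZMod (2 ^ k)) = 0 := by
      have h4 : Multiplicative.ofAdd (-((m : ℕ) : ZMod (2 ^ k))) = (1 : CycTwoPow k) := by
        rw [← hc]
        show _ = (Multiplicative.ofAdd (1 : ZMod (2 ^ k)))⁻¹ ^ m
        rw [← ofAdd_neg, ← ofAdd_nsmul, smul_neg, nsmul_eq_mul, mul_one]
      simpa [neg_eq_zero] using h4
    have hdvd : (2 ^ k : ℕ) ∣ m := (ZMod.natCast_eq_zero_iff m (2 ^ k)).mp hmz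
    have hmlt : m < 2 ^ k := by
      have : (2 : ℕ) ^ (k + 1) = 2 * 2 ^ k := by ring
      omega
    have hm0 : m = 0 := Nat.eq_zero_of_dvd_of_lt hdvd hmlt
    subst hm0
    subst hb
    simp [Prod.ext_iff]
  · subst hm
    rw [psi_odd, Equiv.Perm.mul_apply, rho_apply] at h
    rcases u with g | g
    · simp at h
    · simp at h


/-- `f` preserves the Cayley adjacency relation of `S`. -/
def Pres (S : Set (D k A)) (f : Equiv.Perm (D k A)) : Prop :=
  ∀ u v : D k A, (v * u⁻¹ ∈ S ↔ f v * (f u)⁻¹ ∈ S)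

lemma Pres.mul {S : Set (D k A)} {f g : Equiv.Perm (D k A)}
    (hf : Pres S f) (hg : Pres S g) : Pres S (f * g) := fun u v => by
  rw [hg u v, hf (g u) (g v)]; rfl

lemma Pres.one {S : Set (D k A)} : Pres S (1 : Equiv.Perm (D k A)) := fun u v => Iff.rfl

lemma Pres.pow {S : Set (D k A)} {f : Equiv.Perm (D k A)} (hf : Pres S f) (n : ℕ) :
    Pres S (f ^ n) := by
  induction n with
  | zero => simpa using Pres.one
  | succ n ih => rw [pow_succ]; exact ih.mul hf

lemma pres_rho (S : Set (D k A)) (t : CycTwoPow k × A) : Pres S (rho k A t) := by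
  intro u v
  simp [mul_inv_rev, mul_assoc, -GenDihedral.inv_r, mul_inv_cancel_left]

lemma pres_phi (S : Set (D k A)) (a : CycTwoPow k × A)
    (hSinv : ∀ x : D k A, x⁻¹ ∈ S ↔ x ∈ S)
    (hS : ∀ g : CycTwoPow k × A,
      (GenDihedral.sr (a * g) ∈ S ↔ GenDihedral.sr (a * g⁻¹ * cElt k A) ∈ S)) :
    Pres S (phi k A a) := by
  intro u v
  rcases u with g | g <;> rcases v with h | h
  · -- u = r g, v = r h
    have e1 : (GenDihedral.r h * (GenDihedral.r g)⁻¹ : D k A) = .r (h * g⁻¹) := by simp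
    have e2 : phi k A a (.r h) * (phi k A a (.r g))⁻¹ = ((.r (h * g⁻¹) : D k A))⁻¹ := by
      simp only [phi_r, GenDihedral.inv_sr, GenDihedral.sr_mul_sr, GenDihedral.inv_r,
        mul_inv_rev]
      rw [inv_inv, mul_comm h⁻¹ a⁻¹, mul_comm a g, mul_assoc g, mul_inv_cancel_left]
    rw [e1, e2]
    exact (hSinv _).symm
  · -- u = r g, v = sr h
    have e1 : (GenDihedral.sr h * (GenDihedral.r g)⁻¹ : D k A) =
        .sr (a * (a⁻¹ * (h * g⁻¹))) := by simp
    have e2 : phi k A a (.sr h) * (phi k A a (.r g))⁻¹ =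
        (.sr (a * (a⁻¹ * (h * g⁻¹))⁻¹ * cElt k A) : D k A) := by
      simp [mul_inv_rev, mul_comm, mul_left_comm, mul_assoc, inv_mul_cancel_left,
        mul_inv_cancel_left]
    rw [e1, e2]
    exact hS (a⁻¹ * (h * g⁻¹))
  · -- u = sr g, v = r h
    have e1 : (GenDihedral.r h * (GenDihedral.sr g)⁻¹ : D k A) =
        .sr (a * (a⁻¹ * (g * h⁻¹))) := by simp
    have e2 : phi k A a (.r h) * (phi k A a (.sr g))⁻¹ =
        (.sr (a * (a⁻¹ * (g * h⁻¹))⁻¹ * cElt k A) : D k A) := by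
      simp [mul_inv_rev, mul_comm, mul_left_comm, mul_assoc, inv_mul_cancel_left,
        mul_inv_cancel_left]
    rw [e1, e2]
    exact hS (a⁻¹ * (g * h⁻¹))
  · -- u = sr g, v = sr h
    have e1 : (GenDihedral.sr h * (GenDihedral.sr g)⁻¹ : D k A) = .r (g * h⁻¹) := by simp
    have e2 : phi k A a (.sr h) * (phi k A a (.sr g))⁻¹ = ((.r (g * h⁻¹) : D k A))⁻¹ := by
      simp [mul_inv_rev, mul_comm, mul_left_comm, mul_assoc, inv_mul_cancel_left,
        mul_inv_cancel_left]
    rw [e1, e2]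
    exact (hSinv _).symm

lemma trans_exists (a : CycTwoPow k × A) (u v : D k A) :
    ∃ p : Multiplicative (ZMod (2 ^ (k + 1))) × A, psi k A a p u = v := by
  rcases u with g | g <;> rcases v with h | h
  · obtain ⟨m, b, hmb⟩ := solve (g⁻¹ * h)
    refine ⟨(Multiplicative.ofAdd (((2 * m : ℕ) : ZMod (2 ^ (k + 1)))), b), ?_⟩
    rw [psi_even, rho_apply, hmb]
    simp [mul_inv_cancel_left]
  · obtain ⟨m, b, hmb⟩ := solve (g⁻¹ * (a⁻¹ * h))
    refine ⟨(Multiplicative.ofAdd (((2 * m + 1 : ℕ) : ZMod (2 ^ (k + 1)))), b), ?_⟩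
    rw [psi_odd, Equiv.Perm.mul_apply, rho_apply, hmb]
    simp [mul_inv_cancel_left]
  · obtain ⟨m, b, hmb⟩ := solve (g⁻¹ * (a * (cElt k A * h)))
    refine ⟨(Multiplicative.ofAdd (((2 * m + 1 : ℕ) : ZMod (2 ^ (k + 1)))), b), ?_⟩
    rw [psi_odd, Equiv.Perm.mul_apply, rho_apply, hmb]
    simp only [GenDihedral.sr_mul_r, phi_sr]
    rw [mul_inv_cancel_left, inv_mul_cancel_left, mul_comm (cElt k A), mul_inv_cancel_right]
  · obtain ⟨m, b, hmb⟩ := solve (g⁻¹ * h)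
    refine ⟨(Multiplicative.ofAdd (((2 * m : ℕ) : ZMod (2 ^ (k + 1)))), b), ?_⟩
    rw [psi_even, rho_apply, hmb]
    simp [mul_inv_cancel_left]

end CayAux

end Aux

/-- Let `G = ⟨c⟩ × A` with `c` of order `2^k` (`A` finite abelian), and let
`D = Dih(G)` with non-identity coset `xG = {sr g : g ∈ G}`. Let `Γ = Cay(D, S)` with `S`
symmetric and avoiding the identity. If there is `y ∈ xG` such that for every `g ∈ G`,
`y·g ∈ S ∩ xG ↔ y·g⁻¹·c ∈ S ∩ xG`, then `Γ` is a Cayley graph on the abelian group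
`C_{2^(k+1)} × A`. -/
theorem cayley_on_genDihedral_isCayley_on_abelian
    (k : ℕ) (A : Type*) [CommGroup A] [Finite A]
    (S : Set (GenDihedral (CycTwoPow k × A)))
    (h1 : (1 : GenDihedral (CycTwoPow k × A)) ∉ S) (hinv : S⁻¹ = S)
    (y : GenDihedral (CycTwoPow k × A)) (hy : y ∈ Set.range GenDihedral.sr)
    (hcond : ∀ g : CycTwoPow k × A,
      y * GenDihedral.r g ∈ S ∩ Set.range GenDihedral.sr ↔
      y * GenDihedral.r (g⁻¹ * cElt k A) ∈ S ∩ Set.range GenDihedral.sr) :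
    IsCayleyGraphOn (cayleyGraph S h1 hinv) (Multiplicative (ZMod (2 ^ (k + 1))) × A) := by
  classical
  obtain ⟨a, rfl⟩ := hy
  -- basic consequences of the hypotheses
  have hSinv : ∀ x : GenDihedral (CycTwoPow k × A), x⁻¹ ∈ S ↔ x ∈ S := by
    intro x
    have h := Set.mem_inv (a := x) (s := S)
    rw [hinv] at h
    exact h.symm
  have hS : ∀ g : CycTwoPow k × A,
      (GenDihedral.sr (a * g) ∈ S ↔ GenDihedral.sr (a * g⁻¹ * cElt k A) ∈ S) := by
    intro g
    have h := hcond g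
    simpa [Set.mem_inter_iff, mul_assoc] using h
  -- the regular abelian subgroup
  refine ⟨(CayAux.psi k A a).range, ?_, ?_, ?_⟩
  · -- adjacency preservation
    rintro f hf u v
    obtain ⟨p, rfl⟩ := MonoidHom.mem_range.mp hf
    obtain ⟨i, b⟩ := p
    obtain ⟨j, -, rfl⟩ := CayAux.exists_nat i
    have hp : CayAux.Pres S (CayAux.psi k A a
        (Multiplicative.ofAdd ((j : ZMod (2 ^ (k + 1)))), b)) := by
      rw [CayAux.psi_apply, CayAux.chi_natCast]
      exact CayAux.Pres.mul ((CayAux.pres_phi S a hSinv hS).pow j)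
        (CayAux.pres_rho S ((1 : CycTwoPow k), b))
    exact (hp u v).symm
  · -- the subgroup is isomorphic to C_{2^(k+1)} × A
    have hinj : Function.Injective (CayAux.psi k A a) := by
      rw [injective_iff_map_eq_one]
      intro p hp
      have h0 : CayAux.psi k A a p (GenDihedral.r 1) = GenDihedral.r 1 := by
        rw [hp]; rfl
      exact CayAux.stab a p _ h0
    exact ⟨(MonoidHom.ofInjective hinj).symm⟩
  · -- regularity
    intro u v
    obtain ⟨p, hp⟩ := CayAux.trans_exists a u v
    refine ⟨⟨CayAux.psi k A a p, ⟨p, rfl⟩⟩, hp, ?_⟩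
    rintro ⟨f, hf⟩ hfu
    obtain ⟨q, rfl⟩ := MonoidHom.mem_range.mp hf
    have hq : CayAux.psi k A a (p⁻¹ * q) u = u := by
      rw [map_mul, Equiv.Perm.mul_apply, hfu, ← hp, map_inv]
      exact Equiv.symm_apply_apply _ _
    have : p⁻¹ * q = 1 := CayAux.stab a _ u hq
    have hqp : q = p := by
      rwa [inv_mul_eq_one, eq_comm] at this
    subst hqp
    rfl
end

section
/- Let k ≥ 0, let A be a finite abelian group, let G = ⟨c⟩ × A be a finite abelian group where c has order 2^k, and let D = Dih(G) with distinguished involution x. Fix y ∈ xG. In Sym(D), let α_a (for a ∈ A) denote right translation z ↦ z·a, and let β be defined by β(z) = y·z for z ∈ G and β(z) = y·c·z for z ∈ xG. Then the subgroup H = ⟨α_a, β : a ∈ A⟩ acts transitively on D: it is transitive on each of the two cosets G and xG, and β interchanges these two cosets; since |H| = |D|, H acts regularly on D. -/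
/-- Right translation `z ↦ z * h`, as a permutation of the group. -/
def rightTransl {G : Type*} [Group G] (h : G) : Equiv.Perm G := Equiv.mulRight h

/-- The permutation `β` of `D = Dih(G)` determined by `y = sr b ∈ xG` and `c ∈ G`:
`β(z) = y·z` for `z ∈ G` and `β(z) = y·c·z` for `z ∈ xG`. -/
def betaPerm {G : Type*} [CommGroup G] (b c : G) : Equiv.Perm (GenDihedral G) where
  toFun z := match z with
    | .r g => GenDihedral.sr b * .r g
    | .sr g => GenDihedral.sr b * .r c * .sr g
  invFun z := match z with
    | .sr h => .r (b⁻¹ * h)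
    | .r h => .sr (h * (b * c))
  left_inv := by
    rintro (g | g) <;>
      simp only [GenDihedral.r_mul_r, GenDihedral.r_mul_sr, GenDihedral.sr_mul_r,
        GenDihedral.sr_mul_sr, inv_mul_cancel_left, mul_inv_cancel_left,
        inv_mul_cancel_right, mul_inv_cancel_right]
  right_inv := by
    rintro (g | g) <;>
      simp only [GenDihedral.r_mul_r, GenDihedral.r_mul_sr, GenDihedral.sr_mul_r,
        GenDihedral.sr_mul_sr, inv_mul_cancel_left, mul_inv_cancel_left,
        inv_mul_cancel_right, mul_inv_cancel_right]

section Regular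

variable {k : ℕ} {A : Type*} [CommGroup A]

/-- Right translation by `r h`, as a monoid hom into the permutation group. -/
def tauHom : (CycTwoPow k × A) →* Equiv.Perm (GenDihedral (CycTwoPow k × A)) where
  toFun h := rightTransl (GenDihedral.r h)
  map_one' := by ext z; rcases z with g | g <;> simp [rightTransl]
  map_mul' h h' := by
    ext z; rcases z with g | g <;>
      simp [rightTransl, mul_assoc, mul_comm, mul_left_comm]

lemma tau_r (h g : CycTwoPow k × A) : tauHom h (.r g) = .r (g * h) := rfl
lemma tau_sr (h g : CycTwoPow k × A) : tauHom h (.sr g) = .sr (g * h) := rfl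

variable (b : CycTwoPow k × A)

lemma beta_r (c g : CycTwoPow k × A) : betaPerm b c (.r g) = .sr (b * g) := rfl
lemma beta_sr (c g : CycTwoPow k × A) :
    betaPerm b c (.sr g) = .r (g * (b * c)⁻¹) := rfl

lemma beta_comm_tau (c h : CycTwoPow k × A) :
    betaPerm b c * tauHom h = tauHom h * betaPerm b c := by
  ext z; rcases z with g | g <;>
    simp only [Equiv.Perm.mul_apply, tau_r, tau_sr, beta_r, beta_sr] <;>
    congr 1 <;>
    simp [mul_comm, mul_left_comm, mul_assoc]

lemma beta_sq (c : CycTwoPow k × A) :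
    betaPerm b c * betaPerm b c = tauHom c⁻¹ := by
  ext z
  rcases z with g | g
  · simp only [Equiv.Perm.mul_apply, tau_r, beta_r, beta_sr, mul_inv_rev]
    congr 1
    rw [mul_comm b g, mul_assoc, mul_comm c⁻¹ b⁻¹, mul_inv_cancel_left]
  · simp only [Equiv.Perm.mul_apply, tau_sr, beta_r, beta_sr, mul_inv_rev]
    congr 1
    rw [mul_comm b, mul_assoc, inv_mul_cancel_right]

lemma exists_pow_cGen (u : CycTwoPow k) : ∃ m : ℕ, (cGen k) ^ m = u := by
  haveI : NeZero (2 ^ k) := ⟨pow_ne_zero _ two_ne_zero⟩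
  refine ⟨(Multiplicative.toAdd u).val, ?_⟩
  rw [cGen, ← ofAdd_nsmul]
  simp [nsmul_eq_mul, ZMod.natCast_val, ZMod.cast_id]

/-- The generating set from the statement. -/
def gens : Set (Equiv.Perm (GenDihedral (CycTwoPow k × A))) :=
  {betaPerm b (cElt k A)} ∪
    Set.range fun a : A => rightTransl (GenDihedral.r ((1 : CycTwoPow k), a))

lemma beta_mem : betaPerm b (cElt k A) ∈ Subgroup.closure (gens b) :=
  Subgroup.subset_closure (Or.inl rfl)

lemma tau_mem (h : CycTwoPow k × A) : tauHom h ∈ Subgroup.closure (gens b) := by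
  obtain ⟨u, a⟩ := h
  obtain ⟨m, hm⟩ := exists_pow_cGen u
  have hsplit : ((u, a) : CycTwoPow k × A) = cElt k A ^ m * ((1 : CycTwoPow k), a) := by
    simp [cElt, Prod.pow_def, Prod.mul_def, hm]
  have h1 : tauHom ((1 : CycTwoPow k), a) ∈ Subgroup.closure (gens b) :=
    Subgroup.subset_closure (Or.inr ⟨a, rfl⟩)
  have hc : tauHom (cElt k A) ∈ Subgroup.closure (gens b) := by
    have : tauHom (cElt k A) = (betaPerm b (cElt k A) * betaPerm b (cElt k A))⁻¹ := by
      rw [beta_sq]; rw [← map_inv, inv_inv]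
    rw [this]
    exact inv_mem (mul_mem (beta_mem b) (beta_mem b))
  rw [hsplit, map_mul, map_pow]
  exact mul_mem (pow_mem hc m) h1

lemma key_mul (h h' : CycTwoPow k × A) :
    betaPerm b (cElt k A) * tauHom h * (betaPerm b (cElt k A) * tauHom h') =
      tauHom ((cElt k A)⁻¹ * h * h') := by
  simp only [← mul_assoc]
  rw [mul_assoc (betaPerm b (cElt k A)) (tauHom h) (betaPerm b (cElt k A)),
    ← beta_comm_tau, ← mul_assoc, beta_sq, ← map_mul, ← map_mul]

lemma mem_iff (f : Equiv.Perm (GenDihedral (CycTwoPow k × A))) :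
    f ∈ Subgroup.closure (gens b) ↔
      (∃ h, f = tauHom h) ∨ (∃ h, f = betaPerm b (cElt k A) * tauHom h) := by
  constructor
  · intro hf
    induction hf using Subgroup.closure_induction with
    | mem x hx =>
      rcases hx with hx | ⟨a, rfl⟩
      · rw [Set.mem_singleton_iff] at hx
        subst hx
        exact Or.inr ⟨1, by rw [map_one, mul_one]⟩
      · exact Or.inl ⟨((1 : CycTwoPow k), a), rfl⟩
    | one => exact Or.inl ⟨1, (map_one tauHom).symm⟩
    | mul x y hx hy ihx ihy =>
      rcases ihx with ⟨h, rfl⟩ | ⟨h, rfl⟩ <;> rcases ihy with ⟨h', rfl⟩ | ⟨h', rfl⟩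
      · exact Or.inl ⟨h * h', (map_mul _ _ _).symm⟩
      · exact Or.inr ⟨h * h', by
          rw [← mul_assoc, ← beta_comm_tau, mul_assoc, ← map_mul]⟩
      · exact Or.inr ⟨h * h', by rw [map_mul, mul_assoc]⟩
      · exact Or.inl ⟨(cElt k A)⁻¹ * h * h', key_mul b h h'⟩
    | inv x hx ihx =>
      rcases ihx with ⟨h, rfl⟩ | ⟨h, rfl⟩
      · exact Or.inl ⟨h⁻¹, (map_inv _ _).symm⟩
      · refine Or.inr ⟨cElt k A * h⁻¹, ?_⟩
        refine (eq_inv_of_mul_eq_one_left ?_).symm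
        rw [key_mul]
        rw [show (cElt k A)⁻¹ * (cElt k A * h⁻¹) * h = 1 by group, map_one]
  · rintro (⟨h, rfl⟩ | ⟨h, rfl⟩)
    · exact tau_mem b h
    · exact mul_mem (beta_mem b) (tau_mem b h)

lemma eval_inj {f f' : Equiv.Perm (GenDihedral (CycTwoPow k × A))}
    (hf : f ∈ Subgroup.closure (gens b)) (hf' : f' ∈ Subgroup.closure (gens b))
    (he : f (.r 1) = f' (.r 1)) : f = f' := by
  rcases (mem_iff b f).1 hf with ⟨h, rfl⟩ | ⟨h, rfl⟩ <;>
    rcases (mem_iff b f').1 hf' with ⟨h', rfl⟩ | ⟨h', rfl⟩ <;>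
    simp only [Equiv.Perm.mul_apply, tau_r, beta_r, one_mul] at he <;>
    first
      | (simp at he; done)
      | (injection he with he2;
         first
           | rw [he2]
           | rw [mul_left_cancel he2])

lemma trans_all (u v : GenDihedral (CycTwoPow k × A)) :
    ∃ f ∈ Subgroup.closure (gens b), f u = v := by
  rcases u with g | g <;> rcases v with g' | g'
  · refine ⟨tauHom (g⁻¹ * g'), tau_mem b _, ?_⟩
    rw [tau_r]; congr 1; group
  · refine ⟨betaPerm b (cElt k A) * tauHom (g⁻¹ * b⁻¹ * g'),
      mul_mem (beta_mem b) (tau_mem b _), ?_⟩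
    rw [Equiv.Perm.mul_apply, tau_r, beta_r]
    congr 1; group
  · refine ⟨betaPerm b (cElt k A) * tauHom (g⁻¹ * g' * (b * cElt k A)),
      mul_mem (beta_mem b) (tau_mem b _), ?_⟩
    rw [Equiv.Perm.mul_apply, tau_sr, beta_sr]
    congr 1; group
  · refine ⟨tauHom (g⁻¹ * g'), tau_mem b _, ?_⟩
    rw [tau_sr]; congr 1; group

end Regular

/-- Let `G = ⟨c⟩ × A` with `c` of order `2^k` (`A` finite abelian), let
`D = Dih(G)`, fix `y = sr b ∈ xG`, `β` as above and `α_a : z ↦ z·a` for `a ∈ A`, and let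
`H = ⟨α_a, β : a ∈ A⟩ ≤ Sym(D)`. Then `H` is transitive on each of the two cosets `G` and
`xG` of `D`, `β` interchanges the two cosets, `H` is transitive on `D`, and — its order
being `|D|` — `H` acts regularly on `D`. -/
theorem betaPerm_translations_act_regularly
    (k : ℕ) (A : Type*) [CommGroup A] [Finite A] (b : CycTwoPow k × A) :
    (∀ g g' : CycTwoPow k × A,
      ∃ f ∈ Subgroup.closure ({betaPerm b (cElt k A)} ∪
          Set.range fun a : A => rightTransl (GenDihedral.r ((1 : CycTwoPow k), a))),
        f (GenDihedral.r g) = GenDihedral.r g') ∧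
    (∀ g g' : CycTwoPow k × A,
      ∃ f ∈ Subgroup.closure ({betaPerm b (cElt k A)} ∪
          Set.range fun a : A => rightTransl (GenDihedral.r ((1 : CycTwoPow k), a))),
        f (GenDihedral.sr g) = GenDihedral.sr g') ∧
    (∀ g : CycTwoPow k × A,
      (∃ h, betaPerm b (cElt k A) (GenDihedral.r g) = GenDihedral.sr h) ∧
      (∃ h, betaPerm b (cElt k A) (GenDihedral.sr g) = GenDihedral.r h)) ∧
    (∀ u v : GenDihedral (CycTwoPow k × A),
      ∃ f ∈ Subgroup.closure ({betaPerm b (cElt k A)} ∪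
          Set.range fun a : A => rightTransl (GenDihedral.r ((1 : CycTwoPow k), a))),
        f u = v) ∧
    Nat.card (Subgroup.closure ({betaPerm b (cElt k A)} ∪
        Set.range fun a : A => rightTransl (GenDihedral.r ((1 : CycTwoPow k), a)))) =
      Nat.card (GenDihedral (CycTwoPow k × A)) ∧
    (∀ u v : GenDihedral (CycTwoPow k × A),
      ∃! f : (Subgroup.closure ({betaPerm b (cElt k A)} ∪
          Set.range fun a : A => rightTransl (GenDihedral.r ((1 : CycTwoPow k), a)))),
        (f : Equiv.Perm (GenDihedral (CycTwoPow k × A))) u = v) := by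
  have hbij : Function.Bijective
      (fun f : Subgroup.closure (gens b) =>
        (f : Equiv.Perm (GenDihedral (CycTwoPow k × A))) (.r 1)) := by
    constructor
    · rintro ⟨f, hf⟩ ⟨f', hf'⟩ h
      exact Subtype.ext (eval_inj b hf hf' h)
    · intro v
      obtain ⟨f, hf, hfe⟩ := trans_all b (.r 1) v
      exact ⟨⟨f, hf⟩, hfe⟩
  refine ⟨?_, ?_, ?_, ?_, ?_, ?_⟩
  · exact fun g g' => trans_all b (.r g) (.r g')
  · exact fun g g' => trans_all b (.sr g) (.sr g')
  · exact fun g => ⟨⟨b * g, rfl⟩, ⟨g * (b * cElt k A)⁻¹, rfl⟩⟩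
  · exact trans_all b
  · exact Nat.card_eq_of_bijective _ hbij
  · intro u v
    obtain ⟨f, hf, hfe⟩ := trans_all b u v
    obtain ⟨g, hg, hge⟩ := trans_all b (.r 1) u
    refine ⟨⟨f, hf⟩, hfe, ?_⟩
    rintro ⟨f', hf'⟩ hf'e
    have hkey : f' * g = f * g := by
      refine eval_inj b (mul_mem hf' hg) (mul_mem hf hg) ?_
      rw [Equiv.Perm.mul_apply, Equiv.Perm.mul_apply, hge]
      exact hf'e.trans hfe.symm
    exact Subtype.ext (mul_right_cancel hkey)
end

section
/- Let G = C₉ × C₃ with a a generator of C₉ and b a generator of C₃, and let S = {(a, e), (a⁻¹, e), (e, b), (e, b⁻¹)}. Then the automorphism group of the Cayley graph Cay(G, S) contains exactly one subgroup acting regularly on the vertices, namely the group of right translations; in particular, Cay(G, S) is not a Cayley graph on any group not isomorphic to C₉ × C₃. -/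
/-- The subgroup of `Sym(G)` consisting of all right translations `z ↦ z * g`. -/
def rightTranslations (G : Type*) [CommGroup G] : Subgroup (Equiv.Perm G) where
  carrier := Set.range fun g : G => Equiv.mulRight g
  one_mem' := ⟨1, by ext z; simp⟩
  mul_mem' := by
    rintro _ _ ⟨g, rfl⟩ ⟨h, rfl⟩
    exact ⟨h * g, by ext z; simp [mul_assoc]⟩
  inv_mem' := by
    rintro _ ⟨g, rfl⟩
    exact ⟨g⁻¹, by ext z; simp⟩

/-- The group `C₉ × C₃`. -/
abbrev G93 := Multiplicative (ZMod 9) × Multiplicative (ZMod 3)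

/-- The generator `a` of the factor `C₉`. -/
def aG : G93 := (Multiplicative.ofAdd 1, 1)

/-- The generator `b` of the factor `C₃`. -/
def bG : G93 := (1, Multiplicative.ofAdd 1)

/-- The connection set `S = {a, a⁻¹, b, b⁻¹}`. -/
def S93 : Set G93 := {aG, aG⁻¹, bG, bG⁻¹}

lemma one_not_mem_S93 : (1 : G93) ∉ S93 := by
  simp only [S93, Set.mem_insert_iff, Set.mem_singleton_iff]
  decide

lemma S93_inv : S93⁻¹ = S93 := by
  ext z
  simp only [S93, Set.mem_inv, Set.mem_insert_iff, Set.mem_singleton_iff]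
  constructor <;> · rintro (h | h | h | h) <;> simp_all [inv_eq_iff_eq_inv]

instance (x : G93) : Decidable (x ∈ S93) :=
  decidable_of_iff (x = aG ∨ x = aG⁻¹ ∨ x = bG ∨ x = bG⁻¹) (by simp [S93])

/-- adjacency relation of the Cayley graph -/
def adj93 (u v : G93) : Prop := v * u⁻¹ ∈ S93

instance : DecidableRel adj93 := fun _ _ => inferInstanceAs (Decidable (_ ∈ S93))

lemma adj93_symm {u v : G93} (h : adj93 u v) : adj93 v u := by
  have h' : (v * u⁻¹)⁻¹ ∈ S93 := by
    have h2 : (v * u⁻¹)⁻¹ ∈ S93⁻¹ := Set.inv_mem_inv.mpr h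
    rwa [S93_inv] at h2
  simpa [adj93, mul_inv_rev] using h'

lemma adj93_mul (u v g : G93) : adj93 (u * g) (v * g) ↔ adj93 u v := by
  unfold adj93
  rw [show (v * g) * (u * g)⁻¹ = v * u⁻¹ by simp [mul_inv_rev, mul_comm, mul_assoc, mul_left_comm]]

lemma adj93_mul_right (u s : G93) (hs : s ∈ S93) : adj93 u (u * s) := by
  unfold adj93
  rwa [show (u * s) * u⁻¹ = s by simp [mul_comm, mul_assoc, mul_left_comm]]

/-! ### Decidable combinatorial facts about the graph -/

lemma noCN_a : ∀ t : G93, ¬(adj93 1 t ∧ adj93 aG t) := by decide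

lemma L2d : ∀ w : G93, ¬adj93 1 w ∨ (∃ t, adj93 1 t ∧ adj93 w t) ∨ w = aG ∨ w = aG⁻¹ := by decide

lemma L3d : ∀ w : G93, ¬adj93 1 w ∨ ¬(∃ t, adj93 1 t ∧ adj93 w t) ∨ w = bG ∨ w = bG⁻¹ := by
  decide

set_option maxHeartbeats 1000000 in
lemma L4d : ∀ s t w : G93,
    ¬(s ∈ S93 ∧ t ∈ S93 ∧ ¬adj93 s t ∧ s ≠ t ∧ adj93 w s ∧ adj93 w t) ∨ (w = 1 ∨ w = s * t) := by
  decide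

/-! ### Translated versions (base point `u`) -/

lemma adj93_conj (u w : G93) : adj93 u w ↔ adj93 1 (w * u⁻¹) := by
  have h := adj93_mul u w u⁻¹
  rw [mul_inv_cancel] at h
  exact h.symm

lemma L2' (u w : G93) (h : adj93 u w) (hn : ∀ t, ¬(adj93 u t ∧ adj93 w t)) :
    w = u * aG ∨ w = u * aG⁻¹ := by
  have h1 : adj93 1 (w * u⁻¹) := (adj93_conj u w).mp h
  rcases L2d (w * u⁻¹) with h' | h' | h' | h'
  · exact absurd h1 h'
  · obtain ⟨t, ht1, ht2⟩ := h'
    refine absurd ⟨?_, ?_⟩ (hn (t * u))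
    · have := (adj93_mul 1 t u).mpr ?_
      · simpa using this
      · exact ht1
    · have := (adj93_mul (w * u⁻¹) t u).mpr ht2
      simpa [mul_assoc] using this
  · left
    have : w = aG * u := by
      rw [← h']; simp [mul_assoc]
    rw [this, mul_comm]
  · right
    have : w = aG⁻¹ * u := by
      rw [← h']; simp [mul_assoc]
    rw [this, mul_comm]

lemma L3' (u w : G93) (h : adj93 u w) (he : ∃ t, adj93 u t ∧ adj93 w t) :
    w = u * bG ∨ w = u * bG⁻¹ := by
  have h1 : adj93 1 (w * u⁻¹) := (adj93_conj u w).mp h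
  rcases L3d (w * u⁻¹) with h' | h' | h' | h'
  · exact absurd h1 h'
  · obtain ⟨t, ht1, ht2⟩ := he
    refine absurd ⟨t * u⁻¹, ?_, ?_⟩ h'
    · have := (adj93_mul u t u⁻¹).mpr ht1
      simpa using this
    · exact (adj93_mul w t u⁻¹).mpr ht2
  · left
    have : w = bG * u := by rw [← h']; simp [mul_assoc]
    rw [this, mul_comm]
  · right
    have : w = bG⁻¹ * u := by rw [← h']; simp [mul_assoc]
    rw [this, mul_comm]

lemma L4' (u s t w : G93) (hs : s ∈ S93) (ht : t ∈ S93) (hst : ¬adj93 s t) (hne : s ≠ t)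
    (h1 : adj93 w (u * s)) (h2 : adj93 w (u * t)) : w = u ∨ w = u * s * t := by
  have h1' : adj93 (w * u⁻¹) s := by
    have := (adj93_mul (u * s) w u⁻¹).mpr (adj93_symm h1)
    have hus : u * s * u⁻¹ = s := by simp [mul_comm, mul_assoc, mul_left_comm]
    rw [hus] at this
    exact adj93_symm this
  have h2' : adj93 (w * u⁻¹) t := by
    have := (adj93_mul (u * t) w u⁻¹).mpr (adj93_symm h2)
    have hut : u * t * u⁻¹ = t := by simp [mul_comm, mul_assoc, mul_left_comm]
    rw [hut] at this
    exact adj93_symm this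
  rcases L4d s t (w * u⁻¹) with h' | h' | h'
  · exact absurd ⟨hs, ht, hst, hne, h1', h2'⟩ h'
  · left
    have : w * u⁻¹ * u = 1 * u := by rw [h']
    simpa [mul_assoc] using this
  · right
    have : w * u⁻¹ * u = s * t * u := by rw [h']
    have hw : w = s * t * u := by simpa [mul_assoc] using this
    rw [hw, mul_comm (s * t) u, mul_assoc]

/-! ### Powers of the generators -/

lemma aG_pow (i : ℕ) : aG ^ i = (Multiplicative.ofAdd (i : ZMod 9), 1) := by
  induction i with
  | zero => simp; rfl
  | succ n ih =>
    rw [pow_succ, ih]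
    show (_ * _, _ * _) = _
    simp [aG, ← ofAdd_add]

lemma bG_pow (j : ℕ) : bG ^ j = (1, Multiplicative.ofAdd (j : ZMod 3)) := by
  induction j with
  | zero => simp; rfl
  | succ n ih =>
    rw [pow_succ, ih]
    show (_ * _, _ * _) = _
    simp [bG, ← ofAdd_add]

lemma exists_pow (z : G93) : ∃ i j : ℕ, z = aG ^ i * bG ^ j := by
  refine ⟨(Multiplicative.toAdd z.1).val, (Multiplicative.toAdd z.2).val, ?_⟩
  have hi : (((Multiplicative.toAdd z.1).val : ℕ) : ZMod 9) = Multiplicative.toAdd z.1 :=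
    ZMod.natCast_zmod_val _
  have hj : (((Multiplicative.toAdd z.2).val : ℕ) : ZMod 3) = Multiplicative.toAdd z.2 :=
    ZMod.natCast_zmod_val _
  rw [aG_pow, bG_pow]
  show z = (_ * _, _ * _)
  rw [hi, hj]
  simp

/-! ### Rigidity: an automorphism fixing `1` with known images of `aG`, `bG` is determined -/

section Key

variable (f : Equiv.Perm G93) (hf : ∀ u v, adj93 (f u) (f v) ↔ adj93 u v)

include hf in
lemma noCN_image (hu hw : G93) (hn : ∀ t, ¬(adj93 hu t ∧ adj93 hw t)) :
    ∀ t, ¬(adj93 (f hu) t ∧ adj93 (f hw) t) := by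
  intro t ⟨h1, h2⟩
  refine hn (f.symm t) ⟨?_, ?_⟩
  · have := (hf hu (f.symm t)).mp (by simpa using h1)
    exact this
  · exact (hf hw (f.symm t)).mp (by simpa using h2)

include hf in
lemma line_a (h1 : f 1 = 1) (c : G93) (hc : c = aG ∨ c = aG⁻¹) (hfa : f aG = c) :
    ∀ i : ℕ, f (aG ^ i) = c ^ i ∧ f (aG ^ (i + 1)) = c ^ (i + 1) := by
  intro i
  induction i with
  | zero => constructor <;> simpa
  | succ n ih =>
    refine ⟨ih.2, ?_⟩
    -- the edge a^(n+1) -- a^(n+2) lies on no triangle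
    have hadj : adj93 (aG ^ (n + 1)) (aG ^ (n + 2)) := by
      have := adj93_mul_right (aG ^ (n + 1)) aG (by decide)
      rwa [← pow_succ] at this
    have h2 : adj93 (c ^ (n + 1)) (f (aG ^ (n + 2))) := by
      rw [← ih.2]
      exact (hf _ _).mpr hadj
    have hno : ∀ t, ¬(adj93 (c ^ (n + 1)) t ∧ adj93 (f (aG ^ (n + 2))) t) := by
      rw [← ih.2]
      apply noCN_image f hf
      intro t ⟨ht1, ht2⟩
      refine noCN_a (t * (aG ^ (n + 1))⁻¹) ⟨?_, ?_⟩
      · have := (adj93_mul (aG ^ (n+1)) t (aG ^ (n+1))⁻¹).mpr ht1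
        simpa using this
      · have := (adj93_mul (aG ^ (n+2)) t (aG ^ (n+1))⁻¹).mpr ht2
        have he : aG ^ (n + 2) * (aG ^ (n + 1))⁻¹ = aG := by
          rw [pow_succ]
          simp [mul_comm, mul_assoc, mul_left_comm]
        rwa [he] at this
    have hne : f (aG ^ (n + 2)) ≠ c ^ n := by
      intro he
      rw [← ih.1] at he
      have := f.injective he
      have h2 : aG ^ n * aG ^ 2 = aG ^ n * 1 := by
        rw [mul_one, ← pow_add]
        exact this
      have : (aG : G93) ^ 2 = 1 := mul_left_cancel h2
      revert this
      decide
    rcases L2' _ _ h2 hno with h | h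
    · rcases hc with rfl | rfl
      · rwa [← pow_succ] at h
      · exfalso
        apply hne
        rw [h]
        have : (aG⁻¹ : G93) ^ (n + 1) * aG = aG⁻¹ ^ n := by
          rw [pow_succ]
          simp [mul_assoc]
        rw [this]
    · rcases hc with rfl | rfl
      · exfalso
        apply hne
        rw [h, pow_succ]
        simp [mul_assoc]
      · rw [h]
        simp [pow_succ, mul_inv_rev, mul_assoc]

include hf in
lemma line_b (h1 : f 1 = 1) (d : G93) (hd : d = bG ∨ d = bG⁻¹) (hfb : f bG = d) :
    ∀ j : ℕ, f (bG ^ j) = d ^ j ∧ f (bG ^ (j + 1)) = d ^ (j + 1) := by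
  intro j
  induction j with
  | zero => constructor <;> simpa
  | succ n ih =>
    refine ⟨ih.2, ?_⟩
    have hadj : adj93 (bG ^ (n + 1)) (bG ^ (n + 2)) := by
      have := adj93_mul_right (bG ^ (n + 1)) bG (by decide)
      rwa [← pow_succ] at this
    have h2 : adj93 (d ^ (n + 1)) (f (bG ^ (n + 2))) := by
      rw [← ih.2]
      exact (hf _ _).mpr hadj
    -- common neighbour: b^n  (since b^n = b^(n+3))
    have hb3 : (bG : G93) ^ 3 = 1 := by decide
    have hcn1 : adj93 (bG ^ (n + 1)) (bG ^ n) := by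
      have := adj93_mul_right (bG ^ n) bG (by decide)
      rw [← pow_succ] at this
      exact adj93_symm this
    have hcn2 : adj93 (bG ^ (n + 2)) (bG ^ n) := by
      have := adj93_mul_right (bG ^ (n + 2)) bG (by decide)
      rw [← pow_succ] at this
      have he : bG ^ (n + 3) = bG ^ n := by
        rw [show n + 3 = n + 3 from rfl, pow_add, hb3, mul_one]
      rw [he] at this
      exact adj93_symm (adj93_symm this)
    have hex : ∃ t, adj93 (d ^ (n + 1)) t ∧ adj93 (f (bG ^ (n + 2))) t := by
      refine ⟨f (bG ^ n), ?_, ?_⟩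
      · rw [← ih.2]; exact (hf _ _).mpr hcn1
      · exact (hf _ _).mpr hcn2
    have hne : f (bG ^ (n + 2)) ≠ d ^ n := by
      intro he
      rw [← ih.1] at he
      have := f.injective he
      have h2 : bG ^ n * bG ^ 2 = bG ^ n * 1 := by
        rw [mul_one, ← pow_add]
        exact this
      have : (bG : G93) ^ 2 = 1 := mul_left_cancel h2
      revert this
      decide
    rcases L3' _ _ h2 hex with h | h
    · rcases hd with rfl | rfl
      · rwa [← pow_succ] at h
      · exfalso
        apply hne
        rw [h, pow_succ]
        simp [mul_assoc]
    · rcases hd with rfl | rfl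
      · exfalso
        apply hne
        rw [h, pow_succ]
        simp [mul_assoc]
      · rw [h]
        simp [pow_succ, mul_inv_rev, mul_assoc]

include hf in
lemma key_grid (h1 : f 1 = 1) (c d : G93) (hc : c = aG ∨ c = aG⁻¹) (hd : d = bG ∨ d = bG⁻¹)
    (hfa : f aG = c) (hfb : f bG = d) :
    ∀ j i : ℕ, f (aG ^ i * bG ^ j) = c ^ i * d ^ j := by
  have hcd : ¬adj93 c d ∧ c ≠ d ∧ c ∈ S93 ∧ d ∈ S93 := by
    rcases hc with rfl | rfl <;> rcases hd with rfl | rfl <;> exact ⟨by decide, by decide, by decide, by decide⟩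
  intro j
  induction j with
  | zero =>
    intro i
    simpa using (line_a f hf h1 c hc hfa i).1
  | succ m ihj =>
    intro i
    induction i with
    | zero =>
      simpa using (line_b f hf h1 d hd hfb m).2
    | succ n ihi =>
      -- u = a^n * b^m ; we know f at u, u*a, u*b and determine it at u*a*b
      set u : G93 := aG ^ n * bG ^ m with hu_def
      have hu : f u = c ^ n * d ^ m := ihj n
      have hua : f (u * aG) = (c ^ n * d ^ m) * c := by
        have e1 : u * aG = aG ^ (n + 1) * bG ^ m := by
          rw [hu_def, pow_succ, mul_right_comm]
        have e2 : (c ^ n * d ^ m) * c = c ^ (n + 1) * d ^ m := by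
          rw [pow_succ, mul_right_comm]
        rw [e1, e2]
        exact ihj (n + 1)
      have hub : f (u * bG) = (c ^ n * d ^ m) * d := by
        have e1 : u * bG = aG ^ n * bG ^ (m + 1) := by
          rw [hu_def, pow_succ, mul_assoc]
        have e2 : (c ^ n * d ^ m) * d = c ^ n * d ^ (m + 1) := by
          rw [pow_succ, mul_assoc]
        rw [e1, e2]
        exact ihi
      have hadj_a : adj93 (f (u * aG)) (f (u * aG * bG)) :=
        (hf _ _).mpr (adj93_mul_right (u * aG) bG (by decide))
      have hadj_b : adj93 (f (u * bG)) (f (u * aG * bG)) := by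
        refine (hf _ _).mpr ?_
        have := adj93_mul_right (u * bG) aG (by decide)
        rwa [show u * bG * aG = u * aG * bG by rw [mul_right_comm]] at this
      have hL4 := L4' (c ^ n * d ^ m) c d (f (u * aG * bG)) hcd.2.2.1 hcd.2.2.2 hcd.1 hcd.2.1
        (by rw [← hua]; exact adj93_symm hadj_a)
        (by rw [← hub]; exact adj93_symm hadj_b)
      have hne : f (u * aG * bG) ≠ c ^ n * d ^ m := by
        intro he
        rw [← hu] at he
        have h2 := f.injective he
        have h3 : u * (aG * bG) = u * 1 := by
          rw [mul_one, ← mul_assoc]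
          exact h2
        have : (aG : G93) * bG = 1 := mul_left_cancel h3
        revert this
        decide
      rcases hL4 with h | h
      · exact absurd h hne
      · have egoal : u * aG * bG = aG ^ (n + 1) * bG ^ (m + 1) := by
          rw [hu_def, pow_succ, pow_succ, mul_right_comm (aG ^ n) (bG ^ m) aG, mul_assoc]
        have egoal2 : c ^ n * d ^ m * c * d = c ^ (n + 1) * d ^ (m + 1) := by
          rw [pow_succ, pow_succ, mul_right_comm (c ^ n) (d ^ m) c, mul_assoc]
        rw [← egoal, h, egoal2]

end Key

/-! ### Every automorphism is a twisted translation -/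

def chi00 : G93 →* G93 := MonoidHom.id G93
def chi10 : G93 →* G93 := (invMonoidHom).prodMap (MonoidHom.id _)
def chi01 : G93 →* G93 := (MonoidHom.id _).prodMap invMonoidHom
def chi11 : G93 →* G93 := invMonoidHom

lemma aut_form (F : Equiv.Perm G93) (hF : ∀ u v, adj93 (F u) (F v) ↔ adj93 u v) :
    ∃ (g : G93) (χ : G93 →* G93), (∀ z, χ (χ z) = z) ∧ ∀ z, F z = χ z * g := by
  set g := F 1 with hg
  set f : Equiv.Perm G93 := F.trans (Equiv.mulRight g⁻¹) with hfdef
  have hfz : ∀ z, f z = F z * g⁻¹ := fun z => rfl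
  have hf : ∀ u v, adj93 (f u) (f v) ↔ adj93 u v := by
    intro u v
    rw [hfz, hfz, adj93_mul]
    exact hF u v
  have hf1 : f 1 = 1 := by rw [hfz, ← hg, mul_inv_cancel]
  -- image of aG
  have hadj1a : adj93 1 (f aG) := by
    rw [← hf1]
    exact (hf 1 aG).mpr (by decide)
  have hnoA : ∀ t, ¬(adj93 1 t ∧ adj93 (f aG) t) := by
    rw [← hf1]
    apply noCN_image f hf
    exact noCN_a
  have hfa : f aG = aG ∨ f aG = aG⁻¹ := by
    rcases L2d (f aG) with h | h | h | h
    · exact absurd hadj1a h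
    · obtain ⟨t, ht⟩ := h
      exact absurd ht (hnoA t)
    · exact Or.inl h
    · exact Or.inr h
  -- image of bG
  have hadj1b : adj93 1 (f bG) := by
    rw [← hf1]
    exact (hf 1 bG).mpr (by decide)
  have hexB : ∃ t, adj93 1 t ∧ adj93 (f bG) t := by
    refine ⟨f bG⁻¹, ?_, ?_⟩
    · rw [← hf1]; exact (hf 1 bG⁻¹).mpr (by decide)
    · exact (hf bG bG⁻¹).mpr (by decide)
  have hfb : f bG = bG ∨ f bG = bG⁻¹ := by
    rcases L3d (f bG) with h | h | h | h
    · exact absurd hadj1b h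
    · exact absurd hexB h
    · exact Or.inl h
    · exact Or.inr h
  have main : ∀ χ : G93 →* G93, (∀ z, χ (χ z) = z) → χ aG = f aG → χ bG = f bG →
      ∃ (g : G93) (χ' : G93 →* G93), (∀ z, χ' (χ' z) = z) ∧ ∀ z, F z = χ' z * g := by
    intro χ hinvol ha hb
    refine ⟨g, χ, hinvol, ?_⟩
    intro z
    obtain ⟨i, j, rfl⟩ := exists_pow z
    have hk := key_grid f hf hf1 (f aG) (f bG) hfa hfb rfl rfl j i
    have hχ : χ (aG ^ i * bG ^ j) = (f aG) ^ i * (f bG) ^ j := by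
      rw [map_mul, map_pow, map_pow, ha, hb]
    have hFf : F (aG ^ i * bG ^ j) = f (aG ^ i * bG ^ j) * g := by
      rw [hfz]
      simp [mul_assoc]
    rw [hFf, hk, ← hχ]
  rcases hfa with ha | ha <;> rcases hfb with hb | hb
  · exact main chi00 (by intro z; rfl) (by rw [ha]; rfl) (by rw [hb]; rfl)
  · exact main chi01 (by decide) (by rw [ha]; decide) (by rw [hb]; decide)
  · exact main chi10 (by decide) (by rw [ha]; decide) (by rw [hb]; decide)
  · exact main chi11 (by decide) (by rw [ha]; decide) (by rw [hb]; decide)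

/-! ### The translation homomorphism -/

def transHom : G93 →* Equiv.Perm G93 where
  toFun g := Equiv.mulRight g
  map_one' := Equiv.ext fun z => mul_one z
  map_mul' g h := Equiv.ext fun z => by
    show z * (g * h) = (z * h) * g
    rw [mul_comm g h, mul_assoc]

lemma transHom_injective : Function.Injective transHom := by
  intro g g' h
  have := congrArg (fun e : Equiv.Perm G93 => e 1) h
  simpa [transHom] using this

/-! ### Regular subgroups consist of translations -/

lemma card_G93 : Nat.card G93 = 27 := by
  simp [Nat.card_eq_fintype_card]

lemma reg_card (K : Subgroup (Equiv.Perm G93))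
    (hreg : ∀ u v : G93, ∃! f : K, (f : Equiv.Perm G93) u = v) : Nat.card K = 27 := by
  rw [← card_G93]
  apply Nat.card_eq_of_bijective (fun k : K => (k : Equiv.Perm G93) 1)
  constructor
  · intro k k' h
    obtain ⟨u, hu, huniq⟩ := hreg 1 ((k : Equiv.Perm G93) 1)
    exact (huniq k rfl).trans (huniq k' h.symm).symm
  · intro v
    obtain ⟨f, hf, -⟩ := hreg 1 v
    exact ⟨f, hf⟩

lemma mem_is_translation (K : Subgroup (Equiv.Perm G93))
    (hA : ∀ k ∈ K, ∀ u v : G93, adj93 (k u) (k v) ↔ adj93 u v)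
    (hreg : ∀ u v : G93, ∃! f : K, (f : Equiv.Perm G93) u = v)
    (k : Equiv.Perm G93) (hk : k ∈ K) : ∃ g : G93, ∀ z, k z = z * g := by
  obtain ⟨g, χ, hinvol, hform⟩ := aut_form k (hA k hk)
  have h27 : k ^ 27 = 1 := by
    have h1 : (⟨k, hk⟩ : K) ^ Nat.card K = 1 := pow_card_eq_one'
    rw [reg_card K hreg] at h1
    have h2 := congrArg (Subtype.val) h1
    simpa using h2
  have hkk : ∀ z, k (k z) = z * (χ g * g) := by
    intro z
    rw [hform z, hform (χ z * g)]
    have hstep : χ (χ z * g) = z * χ g := by rw [map_mul, hinvol]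
    rw [hstep, mul_assoc]
  have heven : ∀ m, ∀ z, (k ^ (2 * m)) z = z * (χ g * g) ^ m := by
    intro m
    induction m with
    | zero => intro z; simp
    | succ n ih =>
      intro z
      have e : 2 * (n + 1) = (2 * n + 1) + 1 := by ring
      rw [e, pow_succ, pow_succ, Equiv.Perm.mul_apply, Equiv.Perm.mul_apply, hkk z, ih]
      rw [pow_succ, mul_assoc, mul_comm ((χ g * g) ^ n) (χ g * g)]
  have hz : ∀ z, χ z * (g * (χ g * g) ^ 13) = z := by
    intro z
    have h1 : (k ^ 27) z = z := by rw [h27]; rfl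
    rw [show (27 : ℕ) = 2 * 13 + 1 from rfl, pow_succ, Equiv.Perm.mul_apply, hform z,
      heven 13 (χ z * g), mul_assoc] at h1
    exact h1
  have hg1 : g * (χ g * g) ^ 13 = 1 := by
    have := hz 1
    rwa [map_one, one_mul] at this
  have hχid : ∀ z, χ z = z := by
    intro z
    have := hz z
    rwa [hg1, mul_one] at this
  exact ⟨g, fun z => by rw [hform z, hχid]⟩

/-- For `G = C₉ × C₃` with `S = {a, a⁻¹, b, b⁻¹}` (`a`, `b` generators of
the two factors), the automorphism group of `Cay(G, S)` contains exactly one regular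
subgroup, namely the group of right translations; in particular, `Cay(G, S)` is not a Cayley
graph on any group not isomorphic to `C₉ × C₃`. -/
theorem cayley_C9_C3_unique_regular_subgroup :
    (∀ K : Subgroup (Equiv.Perm G93),
      (∀ f ∈ K, ∀ u v : G93,
        (cayleyGraph S93 one_not_mem_S93 S93_inv).Adj (f u) (f v) ↔
        (cayleyGraph S93 one_not_mem_S93 S93_inv).Adj u v) →
      (∀ u v : G93, ∃! f : K, (f : Equiv.Perm G93) u = v) →
      K = rightTranslations G93) ∧
    ∀ (H : Type) [Group H],
      IsCayleyGraphOn (cayleyGraph S93 one_not_mem_S93 S93_inv) H → Nonempty (H ≃* G93) := by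
  have part1 : ∀ K : Subgroup (Equiv.Perm G93),
      (∀ f ∈ K, ∀ u v : G93,
        (cayleyGraph S93 one_not_mem_S93 S93_inv).Adj (f u) (f v) ↔
        (cayleyGraph S93 one_not_mem_S93 S93_inv).Adj u v) →
      (∀ u v : G93, ∃! f : K, (f : Equiv.Perm G93) u = v) →
      K = rightTranslations G93 := by
    intro K hA hreg
    have hA' : ∀ k ∈ K, ∀ u v : G93, adj93 (k u) (k v) ↔ adj93 u v := fun k hk u v =>
      hA k hk u v
    apply le_antisymm
    · intro k hk
      obtain ⟨g, hg⟩ := mem_is_translation K hA' hreg k hk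
      refine show k ∈ Set.range (fun g : G93 => Equiv.mulRight g) from ⟨g, ?_⟩
      apply Equiv.ext
      intro z
      rw [Equiv.coe_mulRight]
      exact (hg z).symm
    · intro r hr
      obtain ⟨g, rfl⟩ := hr
      obtain ⟨f, hf1, -⟩ := hreg 1 g
      obtain ⟨g', hg'⟩ := mem_is_translation K hA' hreg f.1 f.2
      have hg'g : g' = g := by
        have := hg' 1
        rw [one_mul] at this
        rw [← this, hf1]
      have hfe : (f : Equiv.Perm G93) = Equiv.mulRight g := by
        apply Equiv.ext
        intro z
        rw [hg' z, hg'g, Equiv.coe_mulRight]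
      have hmem : Equiv.mulRight g ∈ K := by rw [← hfe]; exact f.2
      exact hmem
  refine ⟨part1, ?_⟩
  intro H _ h
  obtain ⟨K, hA, ⟨iso⟩, hreg⟩ := h
  have hKeq := part1 K hA hreg
  have e0 : G93 ≃* transHom.range := MonoidHom.ofInjective transHom_injective
  have hrange : transHom.range = rightTranslations G93 := by
    ext x
    constructor
    · rintro ⟨g, rfl⟩
      exact ⟨g, rfl⟩
    · rintro ⟨g, rfl⟩
      exact ⟨g, rfl⟩
  exact ⟨iso.symm.trans ((MulEquiv.subgroupCongr hKeq).trans
    ((MulEquiv.subgroupCongr hrange).symm.trans e0.symm))⟩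
end
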